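/- arXiv:math/9907026 — 4 statements merged into one kernel-verified Lean document; each statement's English description precedes it below -/
import Mathlib

section
/- Let X = x₁x₂⋯x_ℓ be an expression in a graph product of groups. Then X is reduced if and only if for all i < j such that I(x_i) = I(x_j) there exists k with i < k < j such that I(x_k) is not adjacent to I(x_i) in Γ. -/
universe u v

/-- A syllable: a vertex `I` of the graph together with a nontrivial element of `G I`. -/
def Syllable {Λ : Type u} (G : Λ → Type v) [∀ I, Group (G I)] : Type (max u v) :=
  Σ I : Λ, {g : G I // g ≠ 1}

section Words

variable {Λ : Type u} {G : Λ → Type v} [∀ I, Group (G I)]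

/-- A single shuffle: swap two consecutive syllables with adjacent vertices. -/
def ShuffleStep (adj : Λ → Λ → Prop) (L L' : List (Syllable G)) : Prop :=
  ∃ (A B : List (Syllable G)) (s t : Syllable G),
    adj s.1 t.1 ∧ L = A ++ s :: t :: B ∧ L' = A ++ t :: s :: B

/-- Shuffle equivalence: finitely many shuffles. -/
def ShuffleEquiv (adj : Λ → Λ → Prop) : List (Syllable G) → List (Syllable G) → Prop :=
  Relation.ReflTransGen (ShuffleStep adj)

/-- An expression admits an amalgamation iff it has two consecutive syllables at the
same vertex. -/
def Amalgamable (L : List (Syllable G)) : Prop :=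
  ∃ (A B : List (Syllable G)) (s t : Syllable G), s.1 = t.1 ∧ L = A ++ s :: t :: B

/-- An expression is reduced iff it is not shuffle equivalent to an expression
admitting an amalgamation. -/
def Reduced (adj : Λ → Λ → Prop) (L : List (Syllable G)) : Prop :=
  ¬ ∃ L', ShuffleEquiv adj L L' ∧ Amalgamable L'

/-- The syllable at position `i` is an initial syllable of the expression `L`:
its vertex is adjacent to the vertices of all earlier syllables. -/
def InitialAt (adj : Λ → Λ → Prop) (L : List (Syllable G)) (i : Fin L.length) : Prop :=
  ∀ j : Fin L.length, j < i → adj (L.get j).1 (L.get i).1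

end Words

namespace GPAux

lemma gel_lt {α : Type*} (A B : List α) (x y : α) {n : ℕ} (h : n < A.length) :
    (A ++ x :: y :: B)[n]'(by simp; omega) = A[n] := List.getElem_append_left h

lemma gel_a {α : Type*} (A B : List α) (x y : α) :
    (A ++ x :: y :: B)[A.length]'(by simp) = x := by
  rw [List.getElem_append_right (by omega), List.getElem_cons, dif_pos (by omega)]

lemma gel_a1 {α : Type*} (A B : List α) (x y : α) :
    (A ++ x :: y :: B)[A.length + 1]'(by simp) = y := by
  rw [List.getElem_append_right (by omega), List.getElem_cons, dif_neg (by omega),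
    List.getElem_cons, dif_pos (by omega)]

lemma gel_gt {α : Type*} (A B : List α) (x y : α) {n : ℕ}
    (hn : n < (A ++ x :: y :: B).length) (h : A.length + 1 < n) :
    (A ++ x :: y :: B)[n] = B[n - A.length - 1 - 1]'(by simp at hn; omega) := by
  rw [List.getElem_append_right (by omega), List.getElem_cons, dif_neg (by omega),
    List.getElem_cons, dif_neg (by omega)]

/-- A position outside the swapped pair has the same value in both lists. -/
lemma gel_out {α : Type*} (A B : List α) (x y x' y' : α) {n : ℕ}
    (hn : n < (A ++ x :: y :: B).length) (hn' : n < (A ++ x' :: y' :: B).length)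
    (h1 : n ≠ A.length) (h2 : n ≠ A.length + 1) :
    (A ++ x :: y :: B)[n] = (A ++ x' :: y' :: B)[n] := by
  rcases lt_or_ge n A.length with h | h
  · rw [gel_lt A B x y h, gel_lt A B x' y' h]
  · have h3 : A.length + 1 < n := by omega
    rw [gel_gt A B x y hn h3, gel_gt A B x' y' hn' h3]

variable {Λ : Type u} {G : Λ → Type v} [∀ I, Group (G I)]

/-- ℕ-indexed version of the right-hand side property. -/
def P (adj : Λ → Λ → Prop) (L : List (Syllable G)) : Prop :=
  ∀ i j : ℕ, ∀ hi : i < L.length, ∀ hj : j < L.length, i < j → (L[i]).1 = (L[j]).1 →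
    ∃ k : ℕ, ∃ hk : k < L.length, i < k ∧ k < j ∧ ¬ adj (L[k]).1 (L[i]).1

lemma P_step {adj : Λ → Λ → Prop} (hsymm : Symmetric adj) (hirr : ∀ I : Λ, ¬ adj I I)
    {L L' : List (Syllable G)} (h : ShuffleStep adj L L') (hP : P adj L) : P adj L' := by
  obtain ⟨A, B, s, t, hadj, rfl, rfl⟩ := h
  have hlen : (A ++ t :: s :: B).length = (A ++ s :: t :: B).length := by simp
  intro i j hi hj hij hv
  have hi1 : i < (A ++ s :: t :: B).length := by rw [← hlen]; exact hi
  have hj1 : j < (A ++ s :: t :: B).length := by rw [← hlen]; exact hj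
  by_cases hia : i = A.length
  · subst hia
    by_cases hja1 : j = A.length + 1
    · -- case 1: impossible
      subst hja1
      rw [gel_a A B t s, gel_a1 A B t s] at hv
      exact absurd (by rwa [hv] at hadj) (hirr _)
    · -- case 2: i = a, j > a + 1
      have hja : A.length + 1 < j := by omega
      rw [gel_a A B t s] at hv
      have hv' : ((A ++ s :: t :: B)[A.length + 1]'(by simp)).1 =
          ((A ++ s :: t :: B)[j]'hj1).1 := by
        rw [gel_a1 A B s t, gel_out A B s t t s hj1 hj (by omega) (by omega)]
        exact hv
      obtain ⟨k, hk, h1, h2, hnadj⟩ := hP (A.length + 1) j (by simp) hj1 hja hv'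
      refine ⟨k, by rw [hlen]; exact hk, by omega, h2, ?_⟩
      rw [gel_a A B t s, gel_out A B t s s t (by rw [hlen]; exact hk) hk (by omega) (by omega)]
      rw [gel_a1 A B s t] at hnadj
      exact hnadj
  · by_cases hia1 : i = A.length + 1
    · -- case 3: i = a + 1, j > a + 1
      subst hia1
      rw [gel_a1 A B t s] at hv
      have hja : A.length + 1 < j := by omega
      have hv' : ((A ++ s :: t :: B)[A.length]'(by simp)).1 =
          ((A ++ s :: t :: B)[j]'hj1).1 := by
        rw [gel_a A B s t, gel_out A B s t t s hj1 hj (by omega) (by omega)]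
        exact hv
      obtain ⟨k, hk, h1, h2, hnadj⟩ := hP A.length j (by simp) hj1 (by omega) hv'
      rw [gel_a A B s t] at hnadj
      have hka1 : k ≠ A.length + 1 := by
        rintro rfl
        rw [gel_a1 A B s t] at hnadj
        exact hnadj (hsymm hadj)
      refine ⟨k, by rw [hlen]; exact hk, by omega, h2, ?_⟩
      rw [gel_a1 A B t s, gel_out A B t s s t (by rw [hlen]; exact hk) hk (by omega) hka1]
      exact hnadj
    · -- i ∉ {a, a+1}
      by_cases hja : j = A.length
      · -- case 4: j = a, i < a
        subst hja
        have hia' : i < A.length := by omega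
        rw [gel_a A B t s, gel_out A B t s s t hi hi1 hia hia1] at hv
        -- hv : (A++s::t::B)[i].1 = t.1
        have hv' : ((A ++ s :: t :: B)[i]'hi1).1 =
            ((A ++ s :: t :: B)[A.length + 1]'(by simp)).1 := by
          rw [gel_a1 A B s t]; exact hv
        obtain ⟨k, hk, h1, h2, hnadj⟩ := hP i (A.length + 1) hi1 (by simp) (by omega) hv'
        have hka : k ≠ A.length := by
          rintro rfl
          rw [gel_a A B s t] at hnadj
          rw [hv] at hnadj
          exact hnadj hadj
        refine ⟨k, by rw [hlen]; exact hk, h1, by omega, ?_⟩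
        rw [gel_out A B t s s t (by rw [hlen]; exact hk) hk hka (by omega),
          gel_out A B t s s t hi hi1 hia hia1]
        exact hnadj
      · by_cases hja1 : j = A.length + 1
        · -- case 5: j = a + 1, i < a
          subst hja1
          have hia' : i < A.length := by omega
          rw [gel_a1 A B t s, gel_out A B t s s t hi hi1 hia hia1] at hv
          have hv' : ((A ++ s :: t :: B)[i]'hi1).1 =
              ((A ++ s :: t :: B)[A.length]'(by simp)).1 := by
            rw [gel_a A B s t]; exact hv
          obtain ⟨k, hk, h1, h2, hnadj⟩ := hP i A.length hi1 (by simp) hia' hv'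
          refine ⟨k, by rw [hlen]; exact hk, h1, by omega, ?_⟩
          rw [gel_out A B t s s t (by rw [hlen]; exact hk) hk (by omega) (by omega),
            gel_out A B t s s t hi hi1 hia hia1]
          exact hnadj
        · -- case 6: i, j ∉ {a, a+1}
          rw [gel_out A B t s s t hi hi1 hia hia1,
            gel_out A B t s s t hj hj1 hja hja1] at hv
          obtain ⟨k, hk, h1, h2, hnadj⟩ := hP i j hi1 hj1 hij hv
          by_cases hka : k = A.length
          · -- use a + 1 as witness
            subst hka
            rw [gel_a A B s t] at hnadj
            refine ⟨A.length + 1, by simp, by omega, by omega, ?_⟩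
            rw [gel_a1 A B t s, gel_out A B t s s t hi hi1 hia hia1]
            exact hnadj
          · by_cases hka1 : k = A.length + 1
            · -- use a as witness
              subst hka1
              rw [gel_a1 A B s t] at hnadj
              refine ⟨A.length, by simp, by omega, by omega, ?_⟩
              rw [gel_a A B t s, gel_out A B t s s t hi hi1 hia hia1]
              exact hnadj
            · refine ⟨k, by rw [hlen]; exact hk, h1, h2, ?_⟩
              rw [gel_out A B t s s t (by rw [hlen]; exact hk) hk hka hka1,
                gel_out A B t s s t hi hi1 hia hia1]
              exact hnadj

lemma P_equiv {adj : Λ → Λ → Prop} (hsymm : Symmetric adj) (hirr : ∀ I : Λ, ¬ adj I I)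
    {L L' : List (Syllable G)} (h : ShuffleEquiv adj L L') (hP : P adj L) : P adj L' := by
  induction h with
  | refl => exact hP
  | tail _ hstep ih => exact P_step hsymm hirr hstep ih

lemma shuffle_out {adj : Λ → Λ → Prop} (hsymm : Symmetric adj)
    (A M B : List (Syllable G)) (x y : Syllable G)
    (hM : ∀ z ∈ M, adj z.1 x.1) :
    ShuffleEquiv adj (A ++ x :: (M ++ y :: B)) ((A ++ M) ++ x :: y :: B) := by
  induction M generalizing A with
  | nil => simp only [List.nil_append, List.append_nil]; exact Relation.ReflTransGen.refl
  | cons m M ih =>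
    have step : ShuffleStep adj (A ++ x :: (m :: M ++ y :: B))
        (A ++ m :: x :: (M ++ y :: B)) :=
      ⟨A, M ++ y :: B, x, m, hsymm (hM m (by simp)), by simp, rfl⟩
    have := ih (A ++ [m]) (fun z hz => hM z (by simp [hz]))
    refine Relation.ReflTransGen.head step ?_
    simpa [ShuffleEquiv] using this

end GPAux


open GPAux in
/-- An expression `L = x₁x₂⋯x_ℓ` in a graph product of groups over a
simplicial graph `adj` is reduced if and only if for all `i < j` with
`I(x_i) = I(x_j)` there is `k` with `i < k < j` such that `I(x_k)` is not adjacent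
to `I(x_i)`. -/
theorem reduced_iff_no_amalgamable_pair {Λ : Type u} (adj : Λ → Λ → Prop)
    (hsymm : Symmetric adj) (hirr : ∀ I : Λ, ¬ adj I I)
    (G : Λ → Type v) [∀ I, Group (G I)] (L : List (Syllable G)) :
    Reduced adj L ↔
      ∀ i j : Fin L.length, i < j → (L.get i).1 = (L.get j).1 →
        ∃ k : Fin L.length, i < k ∧ k < j ∧ ¬ adj (L.get k).1 (L.get i).1 := by
  have hPiff : P adj L ↔
      ∀ i j : Fin L.length, i < j → (L.get i).1 = (L.get j).1 →
        ∃ k : Fin L.length, i < k ∧ k < j ∧ ¬ adj (L.get k).1 (L.get i).1 := by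
    constructor
    · intro hP i j hij hv
      obtain ⟨k, hk, h1, h2, h3⟩ := hP i j i.isLt j.isLt hij hv
      exact ⟨⟨k, hk⟩, h1, h2, h3⟩
    · intro h i j hi hj hij hv
      obtain ⟨k, h1, h2, h3⟩ := h ⟨i, hi⟩ ⟨j, hj⟩ hij hv
      exact ⟨k, k.isLt, h1, h2, h3⟩
  rw [← hPiff]
  constructor
  · -- Reduced → P, by contraposition
    intro hred
    by_contra hP
    apply hred
    simp only [P, not_forall] at hP
    obtain ⟨i, j, hi, hj, hij, hv, hall⟩ := hP
    push_neg at hall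
    have hd2 : L.drop (i + 1) =
        (L.drop (i + 1)).take (j - i - 1) ++ L[j] :: L.drop (j + 1) := by
      conv_lhs => rw [← List.take_append_drop (j - i - 1) (L.drop (i + 1))]
      congr 1
      rw [List.drop_drop, show i + 1 + (j - i - 1) = j from by omega]
      exact List.drop_eq_getElem_cons hj
    have hLdecomp : L = L.take i ++
        L[i] :: ((L.drop (i + 1)).take (j - i - 1) ++ L[j] :: L.drop (j + 1)) := by
      conv_lhs => rw [← List.take_append_drop i L, List.drop_eq_getElem_cons hi, hd2]
    have hMadj : ∀ z ∈ (L.drop (i + 1)).take (j - i - 1), adj z.1 (L[i]).1 := by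
      intro z hz
      obtain ⟨m, hm, rfl⟩ := List.getElem_of_mem hz
      have hm' : m < j - i - 1 := by
        rw [List.length_take] at hm; omega
      have hmL : m < (L.drop (i + 1)).length := by
        rw [List.length_drop]; omega
      have heval : ((L.drop (i + 1)).take (j - i - 1))[m]'hm = L[i + 1 + m]'(by omega) := by
        rw [List.getElem_take]
        exact List.getElem_drop (xs := L)
      rw [heval]
      exact hall (i + 1 + m) (by omega) (by omega) (by omega)
    refine ⟨(L.take i ++ (L.drop (i + 1)).take (j - i - 1)) ++ L[i] :: L[j] :: L.drop (j + 1),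
      ?_, L.take i ++ (L.drop (i + 1)).take (j - i - 1), L.drop (j + 1), L[i], L[j], hv, rfl⟩
    conv_lhs => rw [hLdecomp]
    exact shuffle_out hsymm _ _ _ _ _ hMadj
  · -- P → Reduced
    rintro hP ⟨L', hequiv, hamal⟩
    have hP' : P adj L' := P_equiv hsymm hirr hequiv hP
    obtain ⟨A, B, s, t, hv, rfl⟩ := hamal
    obtain ⟨k, hk, hik, hkj, _⟩ := hP' A.length (A.length + 1) (by simp) (by simp) (by omega)
      (by rw [gel_a A B s t, gel_a1 A B s t]; exact hv)
    omega
end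

section
/- Let G be a graph product of groups, let x, y ∈ G, let D = Δʳ(x) ∩ Δ(y), and suppose that z_I = x_Iʳ y_I is nontrivial for each I ∈ D. Let Z = ∏_{I∈D} z_I (the product taken as an expression with the syllables z_I in any order). If X·(∏_{I∈D} x_Iʳ) and (∏_{I∈D} y_I)·Y are reduced expressions for x and y respectively, then XZY is a reduced expression for xy. -/
universe u v

section GroupPart

variable {Λ : Type u} (adj : Λ → Λ → Prop) (G : Λ → Type v) [∀ I, Group (G I)]

/-- The graph product of the family of groups `G` over the graph `adj`: the quotient of
the free product by the normal closure of the commutators coming from adjacent vertices. -/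
def GraphProduct : Type (max u v) :=
  Monoid.CoprodI G ⧸ Subgroup.normalClosure
    {g : Monoid.CoprodI G | ∃ (I J : Λ) (x : G I) (y : G J), adj I J ∧
      g = Monoid.CoprodI.of x * Monoid.CoprodI.of y *
          (Monoid.CoprodI.of x)⁻¹ * (Monoid.CoprodI.of y)⁻¹}

instance : Group (GraphProduct adj G) :=
  inferInstanceAs (Group (_ ⧸ _))

/-- The canonical image in the graph product of an element of one of the groups. -/
def mkOf {I : Λ} (g : G I) : GraphProduct adj G :=
  QuotientGroup.mk (Monoid.CoprodI.of g)

/-- Evaluation of an expression (a word in the syllables) in the graph product. -/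
def evalWord (L : List (Syllable G)) : GraphProduct adj G :=
  (L.map fun s => mkOf adj G (s.2.1 : G s.1)).prod

/-- `L` is an expression for the group element `x`. -/
def ExprFor (L : List (Syllable G)) (x : GraphProduct adj G) : Prop :=
  evalWord adj G L = x

/-- `s` is an initial syllable of the group element `x`: some reduced expression for `x`
has `s` as an initial syllable. -/
def IsInitialSyllable (x : GraphProduct adj G) (s : Syllable G) : Prop :=
  ∃ L, Reduced adj L ∧ ExprFor adj G L x ∧ ∃ i : Fin L.length, InitialAt adj L i ∧ L.get i = s

/-- `s` is a final syllable of the group element `x`: it is an initial syllable of the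
reverse of some reduced expression for `x`. -/
def IsFinalSyllable (x : GraphProduct adj G) (s : Syllable G) : Prop :=
  ∃ L, Reduced adj L ∧ ExprFor adj G L x ∧
    ∃ i : Fin L.reverse.length, InitialAt adj L.reverse i ∧ L.reverse.get i = s

/-- `I` is an initial vertex of the group element `x`, i.e. `I ∈ Δ(x)`. -/
def InitialVertexOf (x : GraphProduct adj G) (I : Λ) : Prop :=
  ∃ s : Syllable G, IsInitialSyllable adj G x s ∧ s.1 = I

/-- `I` is a final vertex of the group element `x`, i.e. `I ∈ Δʳ(x)`. -/
def FinalVertexOf (x : GraphProduct adj G) (I : Λ) : Prop :=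
  ∃ s : Syllable G, IsFinalSyllable adj G x s ∧ s.1 = I

/-- `I` is a vertex of the group element `x`: some (hence any) reduced expression
for `x` has a syllable at the vertex `I`. -/
def VertexOf (x : GraphProduct adj G) (I : Λ) : Prop :=
  ∃ L, Reduced adj L ∧ ExprFor adj G L x ∧ ∃ s ∈ L, Sigma.fst s = I

/-- `c` is the element `x_I ∈ G_I`: either `c` is nontrivial and the initial syllable of
`x` at the vertex `I`, or `c = 1` and `I` is not an initial vertex of `x`. -/
def InitialPart (x : GraphProduct adj G) (I : Λ) (c : G I) : Prop :=
  (∃ h : c ≠ 1, IsInitialSyllable adj G x ⟨I, ⟨c, h⟩⟩) ∨ (c = 1 ∧ ¬ InitialVertexOf adj G x I)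

/-- The positive cone of the graph product of partially ordered groups: the submonoid
generated by the union of the positive cones of the factors. -/
def posCone (Pc : ∀ I, Submonoid (G I)) : Submonoid (GraphProduct adj G) :=
  Submonoid.closure {g | ∃ (I : Λ) (p : G I), p ∈ Pc I ∧ g = mkOf adj G p}

end GroupPart

section Order

variable {H : Type*} [Group H]

/-- `x ≤ y` in the left-invariant partial order determined by the cone `P`. -/
def lle (P : Submonoid H) (x y : H) : Prop := x⁻¹ * y ∈ P

/-- `x ≤ᵣ y` in the right-invariant partial order determined by the cone `P`. -/
def rle (P : Submonoid H) (x y : H) : Prop := y * x⁻¹ ∈ P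

/-- `x` and `y` have a common upper bound for the left-invariant order. -/
def HasUB (P : Submonoid H) (x y : H) : Prop := ∃ z, lle P x z ∧ lle P y z

/-- `m` is a least upper bound of `x` and `y` for the left-invariant order. -/
def IsLub' (P : Submonoid H) (x y m : H) : Prop :=
  lle P x m ∧ lle P y m ∧ ∀ w, lle P x w → lle P y w → lle P m w

/-- `w` is a greatest lower bound of `u` and `v` for the right-invariant order. -/
def IsRGlb (P : Submonoid H) (u v w : H) : Prop :=
  rle P w u ∧ rle P w v ∧ ∀ z, rle P z u → rle P z v → rle P z w

/-- `(H,P)` is a partially ordered group: `P ∩ P⁻¹ = {1}`. -/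
def IsPoGroup (P : Submonoid H) : Prop := ∀ x : H, x ∈ P → x⁻¹ ∈ P → x = 1

/-- `(H,P)` is a quasi-lattice ordered group: it is a partially ordered group in which
every pair of elements with a common upper bound has a least upper bound. -/
def IsQLO (P : Submonoid H) : Prop :=
  IsPoGroup P ∧ ∀ x y : H, HasUB P x y → ∃ m, IsLub' P x y m

end Order

/-- Turn a list `Ds` of vertices and a family of elements `f I ∈ G I`, nontrivial on
`Ds`, into the expression `∏_{I ∈ Ds} f I` (one syllable for each entry of `Ds`). -/
def sylList {Λ : Type u} {G : Λ → Type v} [∀ I, Group (G I)]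
    (Ds : List Λ) (f : ∀ I : Λ, G I) (h : ∀ I ∈ Ds, f I ≠ 1) : List (Syllable G) :=
  Ds.attach.map fun I => ⟨I.1, ⟨f I.1, h I.1 I.2⟩⟩


namespace GPAux

open List

variable {Λ : Type u} {G : Λ → Type v} [∀ I, Group (G I)] {adj : Λ → Λ → Prop}

theorem se_refl (L : List (Syllable G)) : ShuffleEquiv adj L L := Relation.ReflTransGen.refl

theorem se_trans {L M N : List (Syllable G)} (h1 : ShuffleEquiv adj L M)
    (h2 : ShuffleEquiv adj M N) : ShuffleEquiv adj L N := h1.trans h2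

theorem step_symm (hsymm : Symmetric adj) {L M : List (Syllable G)}
    (h : ShuffleStep adj L M) : ShuffleStep adj M L := by
  obtain ⟨A, B, s, t, hadj, rfl, rfl⟩ := h
  exact ⟨A, B, t, s, hsymm hadj, rfl, rfl⟩

theorem se_symm (hsymm : Symmetric adj) {L M : List (Syllable G)}
    (h : ShuffleEquiv adj L M) : ShuffleEquiv adj M L := by
  induction h with
  | refl => exact se_refl L
  | tail _ h2 ih => exact (Relation.ReflTransGen.single (step_symm hsymm h2)).trans ih

theorem step_cons {L M : List (Syllable G)} (u : Syllable G)
    (h : ShuffleStep adj L M) : ShuffleStep adj (u :: L) (u :: M) := by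
  obtain ⟨A, B, s, t, hadj, rfl, rfl⟩ := h
  exact ⟨u :: A, B, s, t, hadj, rfl, rfl⟩

theorem se_cons {L M : List (Syllable G)} (u : Syllable G)
    (h : ShuffleEquiv adj L M) : ShuffleEquiv adj (u :: L) (u :: M) := by
  induction h with
  | refl => exact se_refl _
  | tail _ h2 ih => exact ih.tail (step_cons u h2)

theorem se_append_left (C : List (Syllable G)) {L M : List (Syllable G)}
    (h : ShuffleEquiv adj L M) : ShuffleEquiv adj (C ++ L) (C ++ M) := by
  induction C with
  | nil => exact h
  | cons c C ih => exact se_cons c ih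

theorem step_append_right {L M : List (Syllable G)} (C : List (Syllable G))
    (h : ShuffleStep adj L M) : ShuffleStep adj (L ++ C) (M ++ C) := by
  obtain ⟨A, B, s, t, hadj, rfl, rfl⟩ := h
  exact ⟨A, B ++ C, s, t, hadj, by simp, by simp⟩

theorem se_append_right {L M : List (Syllable G)} (C : List (Syllable G))
    (h : ShuffleEquiv adj L M) : ShuffleEquiv adj (L ++ C) (M ++ C) := by
  induction h with
  | refl => exact se_refl _
  | tail _ h2 ih => exact ih.tail (step_append_right C h2)

/-- Shuffle an element from the front past an adjacent prefix. -/
theorem se_front (hsymm : Symmetric adj) {s : Syllable G} (B : List (Syllable G)) :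
    ∀ A : List (Syllable G), (∀ u ∈ A, adj u.1 s.1) →
      ShuffleEquiv adj (s :: (A ++ B)) (A ++ s :: B) := by
  intro A
  induction A with
  | nil => intro _; exact se_refl _
  | cons a A ih =>
    intro hA
    have h1 : ShuffleStep adj (s :: a :: (A ++ B)) (a :: s :: (A ++ B)) :=
      ⟨[], A ++ B, s, a, hsymm (hA a (by simp)), rfl, rfl⟩
    exact (Relation.ReflTransGen.single h1).trans
      (se_cons a (ih fun u hu => hA u (by simp [hu])))

/-- `I` is a quasi-initial vertex of `L`. -/
def QI (adj : Λ → Λ → Prop) (I : Λ) (L : List (Syllable G)) : Prop :=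
  ∃ (A : List (Syllable G)) (s : Syllable G) (B : List (Syllable G)),
    L = A ++ s :: B ∧ s.1 = I ∧ ∀ u ∈ A, adj u.1 I

/-- Combinatorial criterion for non-reducedness. -/
def Collapsible (adj : Λ → Λ → Prop) (L : List (Syllable G)) : Prop :=
  ∃ (A : List (Syllable G)) (s : Syllable G) (B : List (Syllable G)),
    L = A ++ s :: B ∧ QI adj s.1 B

theorem qi_cons_iff {I : Λ} {u : Syllable G} {L : List (Syllable G)} :
    QI adj I (u :: L) ↔ u.1 = I ∨ (adj u.1 I ∧ QI adj I L) := by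
  constructor
  · rintro ⟨A, s, B, hL, hs, hA⟩
    cases A with
    | nil => simp at hL; exact Or.inl (hL.1 ▸ hs)
    | cons a A =>
      simp only [cons_append, cons.injEq] at hL
      obtain ⟨rfl, rfl⟩ := hL
      exact Or.inr ⟨hA _ (mem_cons_self), A, s, B, rfl, hs,
        fun v hv => hA v (mem_cons_of_mem _ hv)⟩
  · rintro (h | ⟨hadj, A, s, B, rfl, hs, hA⟩)
    · exact ⟨[], u, L, rfl, h, by simp⟩
    · exact ⟨u :: A, s, B, rfl, hs, by
        intro v hv
        rcases mem_cons.mp hv with rfl | hv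
        · exact hadj
        · exact hA v hv⟩

theorem qi_append {I : Λ} {B C : List (Syllable G)} (h : QI adj I B) :
    QI adj I (B ++ C) := by
  obtain ⟨A, s, B', rfl, hs, hA⟩ := h
  exact ⟨A, s, B' ++ C, by simp, hs, hA⟩

theorem qi_swap (hsymm : Symmetric adj) {I : Λ} {s t : Syllable G}
    (hadj : adj s.1 t.1) :
    ∀ P B : List (Syllable G), QI adj I (P ++ s :: t :: B) → QI adj I (P ++ t :: s :: B) := by
  intro P B
  induction P with
  | nil =>
    simp only [nil_append]
    rw [qi_cons_iff, qi_cons_iff, qi_cons_iff, qi_cons_iff]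
    rintro (rfl | ⟨h1, rfl | ⟨h2, h3⟩⟩)
    · exact Or.inr ⟨hsymm hadj, Or.inl rfl⟩
    · exact Or.inl rfl
    · exact Or.inr ⟨h2, Or.inr ⟨h1, h3⟩⟩
  | cons p P ih =>
    simp only [cons_append]
    rw [qi_cons_iff, qi_cons_iff]
    rintro (h | ⟨h1, h2⟩)
    · exact Or.inl h
    · exact Or.inr ⟨h1, ih h2⟩

theorem qi_step (hsymm : Symmetric adj) {I : Λ} {L L' : List (Syllable G)}
    (h : ShuffleStep adj L L') (hq : QI adj I L) : QI adj I L' := by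
  obtain ⟨A, B, s, t, hadj, rfl, rfl⟩ := h
  exact qi_swap hsymm hadj A B hq

theorem qi_se (hsymm : Symmetric adj) {I : Λ} {L L' : List (Syllable G)}
    (h : ShuffleEquiv adj L L') (hq : QI adj I L) : QI adj I L' := by
  induction h with
  | refl => exact hq
  | tail _ h2 ih => exact qi_step hsymm h2 ih

theorem collapsible_cons_iff {u : Syllable G} {L : List (Syllable G)} :
    Collapsible adj (u :: L) ↔ QI adj u.1 L ∨ Collapsible adj L := by
  constructor
  · rintro ⟨A, s, B, hL, hq⟩
    cases A with
    | nil =>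
      simp only [nil_append, cons.injEq] at hL
      obtain ⟨rfl, rfl⟩ := hL
      exact Or.inl hq
    | cons a A =>
      simp only [cons_append, cons.injEq] at hL
      obtain ⟨rfl, rfl⟩ := hL
      exact Or.inr ⟨A, s, B, rfl, hq⟩
  · rintro (h | ⟨A, s, B, rfl, hq⟩)
    · exact ⟨[], u, L, rfl, h⟩
    · exact ⟨u :: A, s, B, rfl, hq⟩

theorem collapsible_swap (hsymm : Symmetric adj) {s t : Syllable G}
    (hadj : adj s.1 t.1) :
    ∀ P B : List (Syllable G),
      Collapsible adj (P ++ s :: t :: B) → Collapsible adj (P ++ t :: s :: B) := by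
  intro P B
  induction P with
  | nil =>
    simp only [nil_append]
    rw [collapsible_cons_iff, collapsible_cons_iff, collapsible_cons_iff,
      collapsible_cons_iff, qi_cons_iff, qi_cons_iff]
    rintro ((heq | ⟨h1, h2⟩) | (h | h))
    · exact Or.inl (Or.inl heq.symm)
    · exact Or.inr (Or.inl h2)
    · exact Or.inl (Or.inr ⟨hadj, h⟩)
    · exact Or.inr (Or.inr h)
  | cons p P ih =>
    simp only [cons_append]
    rw [collapsible_cons_iff, collapsible_cons_iff]
    rintro (h | h)
    · exact Or.inl (qi_swap hsymm hadj P B h)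
    · exact Or.inr (ih h)

theorem collapsible_step (hsymm : Symmetric adj) {L L' : List (Syllable G)}
    (h : ShuffleStep adj L L') (hc : Collapsible adj L) : Collapsible adj L' := by
  obtain ⟨A, B, s, t, hadj, rfl, rfl⟩ := h
  exact collapsible_swap hsymm hadj A B hc

theorem collapsible_se (hsymm : Symmetric adj) {L L' : List (Syllable G)}
    (h : ShuffleEquiv adj L L') (hc : Collapsible adj L) : Collapsible adj L' := by
  induction h with
  | refl => exact hc
  | tail _ h2 ih => exact collapsible_step hsymm h2 ih

theorem collapsible_of_amalgamable {L : List (Syllable G)} (h : Amalgamable L) :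
    Collapsible adj L := by
  obtain ⟨A, B, s, t, hst, rfl⟩ := h
  exact ⟨A, s, t :: B, rfl, [], t, B, rfl, hst.symm, by simp⟩

theorem exists_amalgamable_of_collapsible (hsymm : Symmetric adj)
    {L : List (Syllable G)} (h : Collapsible adj L) :
    ∃ L', ShuffleEquiv adj L L' ∧ Amalgamable L' := by
  obtain ⟨A, s, B, rfl, P, t, Q, rfl, hts, hP⟩ := h
  refine ⟨A ++ s :: t :: (P ++ Q), ?_, A, P ++ Q, s, t, hts.symm, rfl⟩
  apply se_append_left
  apply se_cons
  exact se_symm hsymm (se_front hsymm Q P (fun u hu => by rw [hts]; exact hP u hu))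

/-- The combinatorial characterization of reducedness. -/
theorem reduced_iff_not_collapsible (hsymm : Symmetric adj) {L : List (Syllable G)} :
    Reduced adj L ↔ ¬ Collapsible adj L := by
  constructor
  · intro hr hc
    exact hr (exists_amalgamable_of_collapsible hsymm hc)
  · rintro hc ⟨L', hse, ham⟩
    exact hc (collapsible_se hsymm (se_symm hsymm hse) (collapsible_of_amalgamable ham))

theorem collapsible_append_left {B : List (Syllable G)} (A : List (Syllable G))
    (h : Collapsible adj B) : Collapsible adj (A ++ B) := by
  obtain ⟨P, s, Q, rfl, hq⟩ := h
  exact ⟨A ++ P, s, Q, by simp, hq⟩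

theorem collapsible_append_right {A : List (Syllable G)} (B : List (Syllable G))
    (h : Collapsible adj A) : Collapsible adj (A ++ B) := by
  obtain ⟨P, s, Q, rfl, hq⟩ := h
  exact ⟨P, s, Q ++ B, by simp, qi_append hq⟩

end GPAux
namespace GPAux

variable {Λ : Type u} {G : Λ → Type v} [∀ I, Group (G I)] {adj : Λ → Λ → Prop}

open List

/-- Insert an adjacent syllable into the middle of a quasi-initial decomposition. -/
theorem qi_insert {I : Λ} {s : Syllable G} (hadj : adj s.1 I) :
    ∀ (A B : List (Syllable G)), QI adj I (A ++ B) → QI adj I (A ++ s :: B) := by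
  intro A
  induction A with
  | nil =>
    intro B h
    exact qi_cons_iff.mpr (Or.inr ⟨hadj, h⟩)
  | cons a A ih =>
    intro B h
    rw [cons_append, qi_cons_iff] at h ⊢
    rcases h with h | ⟨h1, h2⟩
    · exact Or.inl h
    · exact Or.inr ⟨h1, ih B h2⟩

/-- Removing a quasi-initial syllable preserves non-collapsibility
    (contrapositive form: inserting it preserves collapsibility). -/
theorem collapsible_insert {s : Syllable G} :
    ∀ (A B : List (Syllable G)), (∀ u ∈ A, adj u.1 s.1) → (hsymm : Symmetric adj) →
      Collapsible adj (A ++ B) → Collapsible adj (A ++ s :: B) := by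
  intro A
  induction A with
  | nil =>
    intro B _ _ h
    exact collapsible_cons_iff.mpr (Or.inr h)
  | cons a A ih =>
    intro B hA hsymm h
    rw [cons_append, collapsible_cons_iff] at h ⊢
    rcases h with h | h
    · exact Or.inl (qi_insert (hsymm (hA a (mem_cons_self))) A B h)
    · exact Or.inr (ih B (fun u hu => hA u (mem_cons_of_mem _ hu)) hsymm h)

theorem not_collapsible_erase (hsymm : Symmetric adj) {s : Syllable G}
    {A B : List (Syllable G)} (hA : ∀ u ∈ A, adj u.1 s.1)
    (h : ¬ Collapsible adj (A ++ s :: B)) : ¬ Collapsible adj (A ++ B) :=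
  fun hc => h (collapsible_insert A B hA hsymm hc)

theorem not_collapsible_tail {s : Syllable G} {L : List (Syllable G)}
    (h : ¬ Collapsible adj (s :: L)) : ¬ Collapsible adj L :=
  fun hc => h (collapsible_cons_iff.mpr (Or.inr hc))

theorem not_qi_of_cons_not_collapsible {s : Syllable G} {L : List (Syllable G)}
    (h : ¬ Collapsible adj (s :: L)) : ¬ QI adj s.1 L :=
  fun hq => h (collapsible_cons_iff.mpr (Or.inl hq))

/-- After removing the quasi-initial `I`-syllable from a non-collapsible word,
    no quasi-initial `I`-syllable remains. -/
theorem not_qi_erase (hirr : ∀ I : Λ, ¬ adj I I) {I : Λ} {s : Syllable G}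
    {A B : List (Syllable G)} (hs : s.1 = I) (hA : ∀ u ∈ A, adj u.1 I)
    (h : ¬ Collapsible adj (A ++ s :: B)) : ¬ QI adj I (A ++ B) := by
  rintro ⟨P, t, Q, hPQ, ht, hP⟩
  rcases List.append_eq_append_iff.mp hPQ with ⟨e, hP2, he⟩ | ⟨e, hA2, he⟩
  · -- P = A ++ e, B = e ++ t :: Q
    apply h
    refine ⟨A, s, B, rfl, ?_⟩
    rw [he]
    refine ⟨e, t, Q, rfl, ht.trans hs.symm, fun u hu => ?_⟩
    rw [hs]
    exact hP u (by rw [hP2]; exact mem_append_right A hu)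
  · -- A = P ++ e, t :: Q = e ++ B
    cases e with
    | nil =>
      simp only [nil_append] at he
      apply h
      refine ⟨A, s, B, rfl, ?_⟩
      rw [← he]
      exact ⟨[], t, Q, rfl, ht.trans hs.symm, by simp⟩
    | cons w e =>
      simp only [cons_append, cons.injEq] at he
      obtain ⟨rfl, rfl⟩ := he
      have : adj t.1 I := hA t (by rw [hA2]; simp)
      rw [ht] at this
      exact hirr I this

end GPAux
namespace GPAux

variable {Λ : Type u} {G : Λ → Type v} [∀ I, Group (G I)] {adj : Λ → Λ → Prop}

open List

theorem syl_eta {I : Λ} {s : Syllable G} (h : s.1 = I) :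
    s = ⟨I, h ▸ s.2⟩ := by
  cases s; subst h; rfl

open Classical in
/-- Extract the quasi-initial syllable at vertex `I`, if any. -/
noncomputable def pullFront (adj : Λ → Λ → Prop) (I : Λ) :
    List (Syllable G) → Option ({g : G I // g ≠ 1} × List (Syllable G))
  | [] => none
  | s :: L =>
    if h : s.1 = I then some (h ▸ s.2, L)
    else if adj s.1 I then (pullFront adj I L).map (fun p => (p.1, s :: p.2)) else none

theorem pf_nil {I : Λ} : pullFront (G := G) adj I [] = none := rfl

theorem pf_cons_hit {I : Λ} {s : Syllable G} (L : List (Syllable G)) (h : s.1 = I) :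
    pullFront adj I (s :: L) = some (h ▸ s.2, L) := by
  rw [pullFront, dif_pos h]

theorem pf_cons_hit' {I : Λ} (g : {g : G I // g ≠ 1}) (L : List (Syllable G)) :
    pullFront adj I ((⟨I, g⟩ : Syllable G) :: L) = some (g, L) :=
  pf_cons_hit L rfl

theorem pf_cons_skip {I : Λ} {s : Syllable G} (L : List (Syllable G))
    (h1 : s.1 ≠ I) (h2 : adj s.1 I) :
    pullFront adj I (s :: L) =
      (pullFront adj I L).map (fun p => (p.1, s :: p.2)) := by
  rw [pullFront, dif_neg h1, if_pos h2]

theorem pf_cons_block {I : Λ} {s : Syllable G} (L : List (Syllable G))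
    (h1 : s.1 ≠ I) (h2 : ¬ adj s.1 I) :
    pullFront adj I (s :: L) = none := by
  rw [pullFront, dif_neg h1, if_neg h2]

theorem pf_sound {I : Λ} {g : {g : G I // g ≠ 1}} :
    ∀ {L M : List (Syllable G)}, pullFront adj I L = some (g, M) →
      ∃ A B : List (Syllable G), L = A ++ ⟨I, g⟩ :: B ∧ M = A ++ B ∧
        ∀ u ∈ A, u.1 ≠ I ∧ adj u.1 I := by
  intro L
  induction L with
  | nil => intro M h; simp [pf_nil] at h
  | cons s L ih =>
    intro M h
    by_cases h1 : s.1 = I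
    · rw [pf_cons_hit L h1] at h
      simp only [Option.some.injEq, Prod.mk.injEq] at h
      obtain ⟨hg, rfl⟩ := h
      refine ⟨[], L, ?_, by simp, by simp⟩
      simp only [nil_append]
      rw [syl_eta h1, hg]
    · by_cases h2 : adj s.1 I
      · rw [pf_cons_skip L h1 h2] at h
        rcases Option.map_eq_some_iff.mp h with ⟨⟨g', M'⟩, hp, hq⟩
        simp only [Prod.mk.injEq] at hq
        obtain ⟨rfl, rfl⟩ := hq
        obtain ⟨A, B, rfl, rfl, hA⟩ := ih hp
        exact ⟨s :: A, B, rfl, rfl, by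
          intro u hu
          rcases mem_cons.mp hu with rfl | hu
          · exact ⟨h1, h2⟩
          · exact hA u hu⟩
      · rw [pf_cons_block L h1 h2] at h; exact absurd h (by simp)

theorem pf_complete {I : Λ} (g : {g : G I // g ≠ 1}) :
    ∀ (A B : List (Syllable G)), (∀ u ∈ A, u.1 ≠ I ∧ adj u.1 I) →
      pullFront adj I (A ++ ⟨I, g⟩ :: B) = some (g, A ++ B) := by
  intro A
  induction A with
  | nil => intro B _; exact pf_cons_hit' g B
  | cons a A ih =>
    intro B hA
    rw [cons_append, pf_cons_skip _ (hA a (mem_cons_self)).1 (hA a (mem_cons_self)).2,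
      ih B (fun u hu => hA u (mem_cons_of_mem _ hu))]
    rfl

theorem pf_none_iff (hirr : ∀ I : Λ, ¬ adj I I) {I : Λ} {L : List (Syllable G)} :
    pullFront adj I L = none ↔ ¬ QI adj I L := by
  constructor
  · rintro h ⟨A, s, B, rfl, hs, hA⟩
    have hA' : ∀ u ∈ A, u.1 ≠ I ∧ adj u.1 I := by
      intro u hu
      refine ⟨fun he => hirr I (he ▸ hA u hu), hA u hu⟩
    rw [syl_eta hs] at h
    rw [pf_complete (hs ▸ s.2) A B hA'] at h
    exact absurd h (by simp)
  · intro h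
    cases hpf : pullFront adj I L with
    | none => rfl
    | some p =>
      obtain ⟨A, B, rfl, _, hA⟩ := pf_sound (g := p.1) (M := p.2) (by rw [hpf])
      exact absurd ⟨A, ⟨I, p.1⟩, B, rfl, rfl, fun u hu => (hA u hu).2⟩ h

theorem se_pull (hsymm : Symmetric adj) {I : Λ} {g : {g : G I // g ≠ 1}}
    {L M : List (Syllable G)} (h : pullFront adj I L = some (g, M)) :
    ShuffleEquiv adj L (⟨I, g⟩ :: M) := by
  obtain ⟨A, B, rfl, rfl, hA⟩ := pf_sound h
  exact se_symm hsymm (se_front hsymm B A (fun u hu => (hA u hu).2))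

theorem pf_none_of_pulled (hirr : ∀ I : Λ, ¬ adj I I) {I : Λ}
    {g : {g : G I // g ≠ 1}} {L M : List (Syllable G)}
    (hL : ¬ Collapsible adj L) (h : pullFront adj I L = some (g, M)) :
    pullFront adj I M = none := by
  obtain ⟨A, B, rfl, rfl, hA⟩ := pf_sound h
  exact (pf_none_iff hirr).mpr
    (not_qi_erase hirr rfl (fun u hu => (hA u hu).2) hL)

end GPAux
namespace GPAux

variable {Λ : Type u} {G : Λ → Type v} [∀ I, Group (G I)] {adj : Λ → Λ → Prop}

open List

theorem pf_swap (hsymm : Symmetric adj) (hirr : ∀ I : Λ, ¬ adj I I)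
    {I : Λ} {s t : Syllable G} (hadj : adj s.1 t.1) :
    ∀ P B : List (Syllable G),
      (pullFront adj I (P ++ s :: t :: B) = none ∧
        pullFront adj I (P ++ t :: s :: B) = none) ∨
      ∃ (g : {g : G I // g ≠ 1}) (M M' : List (Syllable G)),
        pullFront adj I (P ++ s :: t :: B) = some (g, M) ∧
        pullFront adj I (P ++ t :: s :: B) = some (g, M') ∧ ShuffleEquiv adj M M' := by
  intro P B
  induction P with
  | nil =>
    simp only [nil_append]
    by_cases h1 : s.1 = I
    · have ht1 : t.1 ≠ I := by
        intro ht
        rw [h1, ht] at hadj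
        exact hirr I hadj
      right
      refine ⟨h1 ▸ s.2, t :: B, t :: B, ?_, ?_, se_refl _⟩
      · rw [pf_cons_hit _ h1]
      · rw [pf_cons_skip _ ht1 (hsymm (h1 ▸ hadj)), pf_cons_hit _ h1]
        rfl
    · by_cases h2 : adj s.1 I
      · by_cases h3 : t.1 = I
        · right
          refine ⟨h3 ▸ t.2, s :: B, s :: B, ?_, ?_, se_refl _⟩
          · rw [pf_cons_skip _ h1 h2, pf_cons_hit _ h3]
            rfl
          · rw [pf_cons_hit _ h3]
        · by_cases h4 : adj t.1 I
          · cases hB : pullFront adj I B with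
            | none =>
              left
              rw [pf_cons_skip _ h1 h2, pf_cons_skip _ h3 h4,
                pf_cons_skip _ h3 h4, pf_cons_skip _ h1 h2, hB]
              exact ⟨rfl, rfl⟩
            | some p =>
              right
              refine ⟨p.1, s :: t :: p.2, t :: s :: p.2, ?_, ?_,
                Relation.ReflTransGen.single ⟨[], p.2, s, t, hadj, rfl, rfl⟩⟩
              · rw [pf_cons_skip _ h1 h2, pf_cons_skip _ h3 h4, hB]
                rfl
              · rw [pf_cons_skip _ h3 h4, pf_cons_skip _ h1 h2, hB]
                rfl
          · left
            have ht1 : t.1 ≠ I := h3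
            constructor
            · rw [pf_cons_skip _ h1 h2, pf_cons_block _ h3 h4]
              rfl
            · rw [pf_cons_block _ h3 h4]
      · have h3 : t.1 ≠ I := fun ht => h2 (ht ▸ hadj)
        left
        constructor
        · rw [pf_cons_block _ h1 h2]
        · by_cases h4 : adj t.1 I
          · rw [pf_cons_skip _ h3 h4, pf_cons_block _ h1 h2]
            rfl
          · rw [pf_cons_block _ h3 h4]
  | cons p P ih =>
    simp only [cons_append]
    by_cases h1 : p.1 = I
    · right
      exact ⟨h1 ▸ p.2, P ++ s :: t :: B, P ++ t :: s :: B,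
        pf_cons_hit _ h1, pf_cons_hit _ h1,
        Relation.ReflTransGen.single ⟨P, B, s, t, hadj, rfl, rfl⟩⟩
    · by_cases h2 : adj p.1 I
      · rcases ih with ⟨hn1, hn2⟩ | ⟨g, M, M', hm1, hm2, hse⟩
        · left
          rw [pf_cons_skip _ h1 h2, pf_cons_skip _ h1 h2, hn1, hn2]
          exact ⟨rfl, rfl⟩
        · right
          refine ⟨g, p :: M, p :: M', ?_, ?_, se_cons p hse⟩
          · rw [pf_cons_skip _ h1 h2, hm1]
            rfl
          · rw [pf_cons_skip _ h1 h2, hm2]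
            rfl
      · left
        rw [pf_cons_block _ h1 h2, pf_cons_block _ h1 h2]
        exact ⟨rfl, rfl⟩

open Classical in
/-- The action of `g ∈ G I` on a (reduced) word. -/
noncomputable def act (adj : Λ → Λ → Prop) (I : Λ) (g : G I)
    (L : List (Syllable G)) : List (Syllable G) :=
  if hg : g = 1 then L else
    match pullFront adj I L with
    | none => ⟨I, ⟨g, hg⟩⟩ :: L
    | some p => if hgh : g * p.1.1 = 1 then p.2 else ⟨I, ⟨g * p.1.1, hgh⟩⟩ :: p.2

theorem act_of_eq_one {I : Λ} {g : G I} (hg : g = 1) (L : List (Syllable G)) :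
    act adj I g L = L := by
  rw [act, dif_pos hg]

theorem act_none {I : Λ} {g : G I} (hg : g ≠ 1) {L : List (Syllable G)}
    (h : pullFront adj I L = none) :
    act adj I g L = ⟨I, ⟨g, hg⟩⟩ :: L := by
  rw [act, dif_neg hg, h]

theorem act_some_cancel {I : Λ} {g : G I} (hg : g ≠ 1) {L M : List (Syllable G)}
    {p : {g : G I // g ≠ 1}} (h : pullFront adj I L = some (p, M))
    (hc : g * p.1 = 1) : act adj I g L = M := by
  rw [act, dif_neg hg, h]
  exact dif_pos hc

theorem act_some {I : Λ} {g : G I} (hg : g ≠ 1) {L M : List (Syllable G)}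
    {p : {g : G I // g ≠ 1}} (h : pullFront adj I L = some (p, M))
    (hc : g * p.1 ≠ 1) : act adj I g L = ⟨I, ⟨g * p.1, hc⟩⟩ :: M := by
  rw [act, dif_neg hg, h]
  exact dif_neg hc

end GPAux
namespace GPAux

variable {Λ : Type u} {G : Λ → Type v} [∀ I, Group (G I)] {adj : Λ → Λ → Prop}

open List

theorem act_not_collapsible (hsymm : Symmetric adj) (hirr : ∀ I : Λ, ¬ adj I I)
    {I : Λ} {g : G I} {L : List (Syllable G)} (hL : ¬ Collapsible adj L) :
    ¬ Collapsible adj (act adj I g L) := by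
  by_cases hg : g = 1
  · rw [act_of_eq_one hg]; exact hL
  cases hpf : pullFront adj I L with
  | none =>
    rw [act_none hg hpf]
    intro hc
    rcases collapsible_cons_iff.mp hc with hq | hc2
    · exact (pf_none_iff hirr).mp hpf hq
    · exact hL hc2
  | some p =>
    obtain ⟨q, M⟩ := p
    obtain ⟨A, B, hLdec, hMdec, hA⟩ := pf_sound hpf
    have hM : ¬ Collapsible adj (A ++ B) := by
      rw [hLdec] at hL
      exact not_collapsible_erase hsymm (fun u hu => (hA u hu).2) hL
    by_cases hc : g * q.1 = 1
    · rw [act_some_cancel hg hpf hc, hMdec]; exact hM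
    · rw [act_some hg hpf hc]
      intro hcol
      rcases collapsible_cons_iff.mp hcol with hq | h2
      · rw [hMdec] at hq
        rw [hLdec] at hL
        exact not_qi_erase hirr rfl (fun u hu => (hA u hu).2) hL hq
      · rw [hMdec] at h2
        exact hM h2

theorem act_step (hsymm : Symmetric adj) (hirr : ∀ I : Λ, ¬ adj I I)
    {I : Λ} {g : G I} {L L' : List (Syllable G)} (h : ShuffleStep adj L L') :
    ShuffleEquiv adj (act adj I g L) (act adj I g L') := by
  by_cases hg : g = 1
  · rw [act_of_eq_one hg, act_of_eq_one hg]
    exact Relation.ReflTransGen.single h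
  obtain ⟨P, B, s, t, hadj, rfl, rfl⟩ := h
  rcases pf_swap hsymm hirr hadj P B with ⟨hn1, hn2⟩ | ⟨g', M, M', hm1, hm2, hse⟩
  · rw [act_none hg hn1, act_none hg hn2]
    exact se_cons _ (Relation.ReflTransGen.single ⟨P, B, s, t, hadj, rfl, rfl⟩)
  · by_cases hc : g * g'.1 = 1
    · rw [act_some_cancel hg hm1 hc, act_some_cancel hg hm2 hc]
      exact hse
    · rw [act_some hg hm1 hc, act_some hg hm2 hc]
      exact se_cons _ hse

theorem act_se (hsymm : Symmetric adj) (hirr : ∀ I : Λ, ¬ adj I I)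
    {I : Λ} {g : G I} {L L' : List (Syllable G)} (h : ShuffleEquiv adj L L') :
    ShuffleEquiv adj (act adj I g L) (act adj I g L') := by
  induction h with
  | refl => exact se_refl _
  | tail _ h2 ih => exact ih.trans (act_step hsymm hirr h2)

theorem syl_congr {I : Λ} {g g' : G I} {hg : g ≠ 1} {hg' : g' ≠ 1} (h : g = g') :
    (⟨I, ⟨g, hg⟩⟩ : Syllable G) = ⟨I, ⟨g', hg'⟩⟩ := by
  subst h; rfl

theorem act_mul (hsymm : Symmetric adj) (hirr : ∀ I : Λ, ¬ adj I I)
    {I : Λ} {g g' : G I} {L : List (Syllable G)} (hL : ¬ Collapsible adj L) :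
    ShuffleEquiv adj (act adj I g (act adj I g' L)) (act adj I (g * g') L) := by
  by_cases hg' : g' = 1
  · rw [act_of_eq_one hg', hg', mul_one]
    exact se_refl _
  by_cases hg : g = 1
  · rw [act_of_eq_one hg, hg, one_mul]
    exact se_refl _
  cases hpf : pullFront adj I L with
  | none =>
    rw [act_none hg' hpf]
    have h1 : pullFront adj I ((⟨I, ⟨g', hg'⟩⟩ : Syllable G) :: L) = some (⟨g', hg'⟩, L) :=
      pf_cons_hit' _ L
    by_cases hgg : g * g' = 1
    · rw [act_some_cancel hg h1 hgg, act_of_eq_one hgg]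
      exact se_refl _
    · rw [act_some hg h1 hgg, act_none hgg hpf]
      exact se_refl _
  | some p =>
    obtain ⟨q, M⟩ := p
    by_cases hq1 : g' * q.1 = 1
    · rw [act_some_cancel hg' hpf hq1]
      have hMn : pullFront adj I M = none := pf_none_of_pulled hirr hL hpf
      rw [act_none hg hMn]
      by_cases hgg : g * g' = 1
      · rw [act_of_eq_one hgg]
        have hgq : g = q.1 := by
          have h1 : g = g'⁻¹ := eq_inv_of_mul_eq_one_left hgg
          have h2 : q.1 = g'⁻¹ := eq_inv_of_mul_eq_one_right hq1
          rw [h1, ← h2]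
        have : (⟨I, ⟨g, hg⟩⟩ : Syllable G) = ⟨I, q⟩ := by
          rw [syl_congr hgq]
        rw [this]
        exact se_symm hsymm (se_pull hsymm hpf)
      · have hc : (g * g') * q.1 ≠ 1 := by
          rw [mul_assoc, hq1, mul_one]; exact hg
        rw [act_some hgg hpf hc]
        rw [show (⟨I, ⟨g, hg⟩⟩ : Syllable G) = ⟨I, ⟨(g * g') * q.1, hc⟩⟩ from
          syl_congr (by rw [mul_assoc, hq1, mul_one])]
        exact se_refl _
    · rw [act_some hg' hpf hq1]
      have h1 : pullFront adj I ((⟨I, ⟨g' * q.1, hq1⟩⟩ : Syllable G) :: M)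
          = some (⟨g' * q.1, hq1⟩, M) := pf_cons_hit' _ M
      by_cases hgq : g * (g' * q.1) = 1
      · rw [act_some_cancel hg h1 hgq]
        have hgg : g * g' ≠ 1 := by
          intro h
          apply q.2
          have := hgq
          rw [← mul_assoc, h, one_mul] at this
          exact this
        rw [act_some_cancel hgg hpf (by rw [mul_assoc]; exact hgq)]
        exact se_refl _
      · rw [act_some hg h1 hgq]
        by_cases hgg : g * g' = 1
        · rw [act_of_eq_one hgg]
          have : g * (g' * q.1) = q.1 := by rw [← mul_assoc, hgg, one_mul]
          rw [show (⟨I, ⟨g * (g' * q.1), hgq⟩⟩ : Syllable G) = ⟨I, q⟩ from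
            syl_congr this]
          exact se_symm hsymm (se_pull hsymm hpf)
        · have hc : (g * g') * q.1 ≠ 1 := by rw [mul_assoc]; exact hgq
          rw [act_some hgg hpf hc]
          rw [show (⟨I, ⟨g * (g' * q.1), hgq⟩⟩ : Syllable G) = ⟨I, ⟨(g * g') * q.1, hc⟩⟩ from
            syl_congr (by rw [mul_assoc])]
          exact se_refl _

theorem pf_none_of_some_other (hirr : ∀ I : Λ, ¬ adj I I) {I J : Λ}
    (hadj : adj I J) {g : {g : G I // g ≠ 1}} {L M : List (Syllable G)}
    (hJ : pullFront adj J L = none) (hI : pullFront adj I L = some (g, M)) :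
    pullFront adj J M = none := by
  obtain ⟨A, B, rfl, rfl, hA⟩ := pf_sound hI
  rw [pf_none_iff hirr] at hJ ⊢
  intro hq
  exact hJ (qi_insert hadj A B hq)

theorem pf_both_some {I J : Λ} (hIJ : I ≠ J) {L : List (Syllable G)}
    {gI : {g : G I // g ≠ 1}} {gJ : {g : G J // g ≠ 1}} {MI MJ : List (Syllable G)}
    (hI : pullFront adj I L = some (gI, MI)) (hJ : pullFront adj J L = some (gJ, MJ)) :
    ∃ N, pullFront adj J MI = some (gJ, N) ∧ pullFront adj I MJ = some (gI, N) := by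
  obtain ⟨A, B, hL1, rfl, hA⟩ := pf_sound hI
  obtain ⟨A', B', hL2, rfl, hA'⟩ := pf_sound hJ
  rw [hL1] at hL2
  rcases append_eq_append_iff.mp hL2 with ⟨e, hA'e, he⟩ | ⟨e, hAe, he⟩
  · cases e with
    | nil =>
      simp only [nil_append, cons.injEq] at he
      replace he := List.cons.inj he
      exact absurd (congrArg Sigma.fst he.1) hIJ
    | cons w e =>
      simp only [cons_append, cons.injEq] at he
      replace he := List.cons.inj he
      obtain ⟨hw, rfl⟩ := he
      subst hw
      refine ⟨(A ++ e) ++ B', ?_, ?_⟩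
      · simp only [← append_assoc]
        refine pf_complete gJ (A ++ e) B' ?_
        intro u hu
        apply hA' u
        rw [hA'e]
        rcases mem_append.mp hu with h | h
        · exact mem_append_left _ h
        · exact mem_append_right _ (mem_cons_of_mem _ h)
      · rw [hA'e]
        simp only [append_assoc, cons_append]
        exact pf_complete gI A (e ++ B') hA
  · cases e with
    | nil =>
      simp only [nil_append, cons.injEq] at he
      replace he := List.cons.inj he
      exact absurd (congrArg Sigma.fst he.1).symm hIJ
    | cons w e =>
      simp only [cons_append, cons.injEq] at he
      replace he := List.cons.inj he
      obtain ⟨hw, rfl⟩ := he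
      subst hw
      refine ⟨(A' ++ e) ++ B, ?_, ?_⟩
      · rw [hAe]
        simp only [append_assoc, cons_append]
        exact pf_complete gJ A' (e ++ B) hA'
      · simp only [← append_assoc]
        refine pf_complete gI (A' ++ e) B ?_
        intro u hu
        apply hA u
        rw [hAe]
        rcases mem_append.mp hu with h | h
        · exact mem_append_left _ h
        · exact mem_append_right _ (mem_cons_of_mem _ h)

theorem act_comm_aux (hsymm : Symmetric adj) (hirr : ∀ I : Λ, ¬ adj I I)
    {I J : Λ} (hadj : adj I J) {x : G I} {y : G J}
    (hx : x ≠ 1) (hy : y ≠ 1) {L : List (Syllable G)}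
    (hJn : pullFront adj J L = none) :
    ShuffleEquiv adj (act adj I x (act adj J y L)) (act adj J y (act adj I x L)) := by
  have hIJ : I ≠ J := fun h => hirr J (h ▸ hadj)
  rw [act_none hy hJn]
  cases hpfI : pullFront adj I L with
  | none =>
    have h1 : pullFront adj I ((⟨J, ⟨y, hy⟩⟩ : Syllable G) :: L) = none := by
      rw [pf_cons_skip (s := ⟨J, ⟨y, hy⟩⟩) _ (Ne.symm hIJ) (hsymm hadj), hpfI]
      rfl
    have h2 : pullFront adj J ((⟨I, ⟨x, hx⟩⟩ : Syllable G) :: L) = none := by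
      rw [pf_cons_skip (s := ⟨I, ⟨x, hx⟩⟩) _ hIJ hadj, hJn]
      rfl
    rw [act_none hx h1, act_none hx hpfI, act_none hy h2]
    exact Relation.ReflTransGen.single ⟨[], L, _, _, hadj, rfl, rfl⟩
  | some p =>
    obtain ⟨q, M⟩ := p
    have h1 : pullFront adj I ((⟨J, ⟨y, hy⟩⟩ : Syllable G) :: L)
        = some (q, (⟨J, ⟨y, hy⟩⟩ : Syllable G) :: M) := by
      rw [pf_cons_skip (s := ⟨J, ⟨y, hy⟩⟩) _ (Ne.symm hIJ) (hsymm hadj), hpfI]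
      rfl
    have hMJ : pullFront adj J M = none := pf_none_of_some_other hirr hadj hJn hpfI
    by_cases hxq : x * q.1 = 1
    · rw [act_some_cancel hx h1 hxq, act_some_cancel hx hpfI hxq, act_none hy hMJ]
      exact se_refl _
    · rw [act_some hx h1 hxq, act_some hx hpfI hxq]
      have h2 : pullFront adj J ((⟨I, ⟨x * q.1, hxq⟩⟩ : Syllable G) :: M) = none := by
        rw [pf_cons_skip (s := ⟨I, ⟨x * q.1, hxq⟩⟩) _ hIJ hadj, hMJ]
        rfl
      rw [act_none hy h2]
      exact Relation.ReflTransGen.single ⟨[], M, _, _, hadj, rfl, rfl⟩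

theorem act_comm (hsymm : Symmetric adj) (hirr : ∀ I : Λ, ¬ adj I I)
    {I J : Λ} (hadj : adj I J) {x : G I} {y : G J} {L : List (Syllable G)} :
    ShuffleEquiv adj (act adj I x (act adj J y L)) (act adj J y (act adj I x L)) := by
  by_cases hx : x = 1
  · rw [act_of_eq_one hx, act_of_eq_one hx]
    exact se_refl _
  by_cases hy : y = 1
  · rw [act_of_eq_one hy, act_of_eq_one hy]
    exact se_refl _
  have hIJ : I ≠ J := fun h => hirr J (h ▸ hadj)
  cases hJ : pullFront adj J L with
  | none => exact act_comm_aux hsymm hirr hadj hx hy hJ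
  | some pJ =>
    cases hI : pullFront adj I L with
    | none => exact se_symm hsymm (act_comm_aux hsymm hirr (hsymm hadj) hy hx hI)
    | some pI =>
      obtain ⟨qI, MI⟩ := pI
      obtain ⟨qJ, MJ⟩ := pJ
      obtain ⟨N, hJI, hIJ'⟩ := pf_both_some hIJ hI hJ
      by_cases hyq : y * qJ.1 = 1
      · rw [act_some_cancel hy hJ hyq]
        by_cases hxq : x * qI.1 = 1
        · rw [act_some_cancel hx hIJ' hxq, act_some_cancel hx hI hxq,
            act_some_cancel hy hJI hyq]
          exact se_refl _
        · rw [act_some hx hIJ' hxq, act_some hx hI hxq]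
          have h2 : pullFront adj J ((⟨I, ⟨x * qI.1, hxq⟩⟩ : Syllable G) :: MI)
              = some (qJ, (⟨I, ⟨x * qI.1, hxq⟩⟩ : Syllable G) :: N) := by
            rw [pf_cons_skip (s := ⟨I, ⟨x * qI.1, hxq⟩⟩) _ hIJ hadj, hJI]
            rfl
          rw [act_some_cancel hy h2 hyq]
          exact se_refl _
      · rw [act_some hy hJ hyq]
        have h1 : pullFront adj I ((⟨J, ⟨y * qJ.1, hyq⟩⟩ : Syllable G) :: MJ)
            = some (qI, (⟨J, ⟨y * qJ.1, hyq⟩⟩ : Syllable G) :: N) := by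
          rw [pf_cons_skip (s := ⟨J, ⟨y * qJ.1, hyq⟩⟩) _ (Ne.symm hIJ) (hsymm hadj), hIJ']
          rfl
        by_cases hxq : x * qI.1 = 1
        · rw [act_some_cancel hx h1 hxq, act_some_cancel hx hI hxq,
            act_some hy hJI hyq]
          exact se_refl _
        · rw [act_some hx h1 hxq, act_some hx hI hxq]
          have h2 : pullFront adj J ((⟨I, ⟨x * qI.1, hxq⟩⟩ : Syllable G) :: MI)
              = some (qJ, (⟨I, ⟨x * qI.1, hxq⟩⟩ : Syllable G) :: N) := by
            rw [pf_cons_skip (s := ⟨I, ⟨x * qI.1, hxq⟩⟩) _ hIJ hadj, hJI]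
            rfl
          rw [act_some hy h2 hyq]
          exact Relation.ReflTransGen.single ⟨[], N, _, _, hadj, rfl, rfl⟩

end GPAux
namespace GPAux

open List

variable {Λ : Type u} {G : Λ → Type v} [∀ I, Group (G I)] {adj : Λ → Λ → Prop}

theorem not_collapsible_nil : ¬ Collapsible (G := G) adj [] := by
  rintro ⟨A, s, B, h, -⟩
  exact absurd h.symm (by simp)

variable (adj) in
/-- The type of non-collapsible (reduced) words. -/
def RWord (G : Λ → Type v) [∀ I, Group (G I)] : Type (max u v) :=
  {L : List (Syllable G) // ¬ Collapsible adj L}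

variable (adj) in
def rwSetoid (G : Λ → Type v) [∀ I, Group (G I)] (hsymm : Symmetric adj) :
    Setoid (RWord adj G) :=
  ⟨fun L M => ShuffleEquiv adj L.1 M.1,
    ⟨fun L => se_refl L.1, fun h => se_symm hsymm h, fun h1 h2 => h1.trans h2⟩⟩

section Action

variable (hsymm : Symmetric adj) (hirr : ∀ I : Λ, ¬ adj I I)

/-- The action of `g : G I` on shuffle classes of reduced words. -/
noncomputable def actW (I : Λ) (g : G I) :
    Quotient (rwSetoid adj G hsymm) → Quotient (rwSetoid adj G hsymm) :=
  Quotient.map' (fun L => ⟨act adj I g L.1, act_not_collapsible hsymm hirr L.2⟩)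
    (fun _ _ h => act_se hsymm hirr h)

theorem actW_mk (I : Λ) (g : G I) (L : RWord adj G) :
    actW hsymm hirr I g (Quotient.mk'' L) =
      Quotient.mk'' ⟨act adj I g L.1, act_not_collapsible hsymm hirr L.2⟩ := rfl

theorem actW_one (I : Λ) (w : Quotient (rwSetoid adj G hsymm)) :
    actW hsymm hirr I 1 w = w := by
  induction w using Quotient.inductionOn' with
  | h L =>
    rw [actW_mk]
    congr 1
    exact Subtype.ext (act_of_eq_one rfl L.1)

theorem actW_mul (I : Λ) (g g' : G I) (w : Quotient (rwSetoid adj G hsymm)) :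
    actW hsymm hirr I (g * g') w =
      actW hsymm hirr I g (actW hsymm hirr I g' w) := by
  induction w using Quotient.inductionOn' with
  | h L =>
    rw [actW_mk]
    exact Quotient.sound' (Setoid.symm' _ (act_mul hsymm hirr L.2))

theorem actW_comm {I J : Λ} (hadj : adj I J) (x : G I) (y : G J)
    (w : Quotient (rwSetoid adj G hsymm)) :
    actW hsymm hirr I x (actW hsymm hirr J y w) =
      actW hsymm hirr J y (actW hsymm hirr I x w) := by
  induction w using Quotient.inductionOn' with
  | h L =>
    rw [actW_mk]
    exact Quotient.sound' (act_comm hsymm hirr hadj)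

/-- The permutation of reduced-word classes induced by `g : G I`. -/
noncomputable def permW (I : Λ) (g : G I) :
    Equiv.Perm (Quotient (rwSetoid adj G hsymm)) where
  toFun := actW hsymm hirr I g
  invFun := actW hsymm hirr I g⁻¹
  left_inv w := by rw [← actW_mul, inv_mul_cancel, actW_one]
  right_inv w := by rw [← actW_mul, mul_inv_cancel, actW_one]

/-- The homomorphism `G I →* Perm W`. -/
noncomputable def phiW (I : Λ) :
    G I →* Equiv.Perm (Quotient (rwSetoid adj G hsymm)) where
  toFun := permW hsymm hirr I
  map_one' := Equiv.ext fun w => actW_one hsymm hirr I w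
  map_mul' g g' := Equiv.ext fun w => actW_mul hsymm hirr I g g' w

/-- The homomorphism from the free product. -/
noncomputable def phiC :
    Monoid.CoprodI G →* Equiv.Perm (Quotient (rwSetoid adj G hsymm)) :=
  Monoid.CoprodI.lift (fun I => phiW hsymm hirr I)

theorem phiC_commutators :
    ∀ z ∈ {g : Monoid.CoprodI G | ∃ (I J : Λ) (x : G I) (y : G J), adj I J ∧
      g = Monoid.CoprodI.of x * Monoid.CoprodI.of y *
          (Monoid.CoprodI.of x)⁻¹ * (Monoid.CoprodI.of y)⁻¹},
      phiC (adj := adj) hsymm hirr z = 1 := by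
  rintro z ⟨I, J, x, y, hadj, rfl⟩
  rw [map_mul, map_mul, map_mul, map_inv, map_inv]
  unfold phiC
  rw [Monoid.CoprodI.lift_of, Monoid.CoprodI.lift_of]
  have hcomm : phiW hsymm hirr I x * phiW hsymm hirr J y
      = phiW hsymm hirr J y * phiW hsymm hirr I x := by
    ext w
    exact actW_comm hsymm hirr hadj x y w
  rw [hcomm]
  group

/-- The action of the graph product on reduced-word classes. -/
noncomputable def rhoW :
    GraphProduct adj G →* Equiv.Perm (Quotient (rwSetoid adj G hsymm)) :=
  QuotientGroup.lift _ (phiC hsymm hirr)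
    (fun z hz => Subgroup.normalClosure_le_normal
      (fun g hg => MonoidHom.mem_ker.mpr (phiC_commutators hsymm hirr g hg)) hz)

theorem rhoW_mkOf {I : Λ} (g : G I) :
    rhoW (adj := adj) hsymm hirr (mkOf adj G g) = phiW hsymm hirr I g := by
  have h1 : rhoW (adj := adj) hsymm hirr (mkOf adj G g)
      = phiC (adj := adj) hsymm hirr (Monoid.CoprodI.of g) := rfl
  rw [h1]
  unfold phiC
  rw [Monoid.CoprodI.lift_of]

theorem rhoW_eval :
    ∀ (L : List (Syllable G)) (hL : ¬ Collapsible adj L),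
      rhoW hsymm hirr (evalWord adj G L) (Quotient.mk'' ⟨[], not_collapsible_nil⟩)
        = Quotient.mk'' ⟨L, hL⟩ := by
  intro L
  induction L with
  | nil =>
    intro hL
    have : evalWord adj G ([] : List (Syllable G)) = 1 := by simp [evalWord]
    rw [this, map_one]
    rfl
  | cons s L ih =>
    intro hL
    have hL' : ¬ Collapsible adj L := not_collapsible_tail hL
    have : evalWord adj G (s :: L) = mkOf adj G s.2.1 * evalWord adj G L := by
      simp [evalWord]
    rw [this, map_mul]
    have h2 := ih hL'
    show rhoW hsymm hirr (mkOf adj G s.2.1)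
      (rhoW hsymm hirr (evalWord adj G L) (Quotient.mk'' ⟨[], not_collapsible_nil⟩)) = _
    rw [h2, rhoW_mkOf]
    show actW hsymm hirr s.1 s.2.1 (Quotient.mk'' ⟨L, hL'⟩) = _
    refine (actW_mk hsymm hirr s.1 s.2.1 ⟨L, hL'⟩).trans ?_
    congr 1
    apply Subtype.ext
    show act adj s.1 s.2.1 L = s :: L
    have hpf : pullFront adj s.1 L = none :=
      (pf_none_iff hirr).mpr (not_qi_of_cons_not_collapsible hL)
    rw [act_none s.2.2 hpf]
    obtain ⟨i, gs⟩ := s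
    rfl

end Action

/-- **Green's theorem**: two reduced expressions of the same element are
shuffle equivalent. -/
theorem green (hsymm : Symmetric adj) (hirr : ∀ I : Λ, ¬ adj I I)
    {L L' : List (Syllable G)} (hL : ¬ Collapsible adj L)
    (hL' : ¬ Collapsible adj L') (h : evalWord adj G L = evalWord adj G L') :
    ShuffleEquiv adj L L' := by
  have h1 := rhoW_eval hsymm hirr L hL
  have h2 := rhoW_eval hsymm hirr L' hL'
  rw [h] at h1
  have := h1.symm.trans h2
  exact Quotient.exact' this

end GPAux
namespace GPAux

open List

variable {Λ : Type u} {G : Λ → Type v} [∀ I, Group (G I)] {adj : Λ → Λ → Prop}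

theorem decomp_of_initialAt {L : List (Syllable G)} {i : Fin L.length}
    (h : InitialAt adj L i) :
    ∃ A B, L = A ++ L.get i :: B ∧ ∀ u ∈ A, adj u.1 (L.get i).1 := by
  refine ⟨L.take i, L.drop (i + 1), ?_, ?_⟩
  · conv_lhs => rw [← List.take_append_drop i L]
    rw [drop_eq_getElem_cons i.2]
    rfl
  · intro u hu
    obtain ⟨k, hk, hku⟩ := getElem_of_mem hu
    have hk' : k < (i : ℕ) := by
      simp only [length_take] at hk
      omega
    have hkL : k < L.length := lt_trans hk' i.2
    rw [getElem_take] at hku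
    have hadj := h ⟨k, hkL⟩ hk'
    have hu' : L.get ⟨k, hkL⟩ = u := by
      rw [List.get_eq_getElem]
      exact hku
    rw [hu'] at hadj
    exact hadj

theorem initialAt_mk {L A B : List (Syllable G)} {s : Syllable G}
    (hdec : L = A ++ s :: B) (hA : ∀ u ∈ A, adj u.1 s.1) :
    ∃ i : Fin L.length, InitialAt adj L i ∧ L.get i = s := by
  subst hdec
  have hlen : A.length < (A ++ s :: B).length := by simp
  have hget : (A ++ s :: B).get ⟨A.length, hlen⟩ = s := by
    simp only [List.get_eq_getElem]
    rw [getElem_append_right (Nat.le_refl _)]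
    simp
  refine ⟨⟨A.length, hlen⟩, ?_, hget⟩
  intro j hj
  rw [hget]
  have hjA : (j : ℕ) < A.length := hj
  have : (A ++ s :: B).get j = A[(j : ℕ)] := by
    simp only [List.get_eq_getElem]
    exact getElem_append_left hjA
  rw [this]
  exact hA _ (getElem_mem hjA)

theorem isInitial_of_decomp {yv : GraphProduct adj G} {A B : List (Syllable G)}
    {s : Syllable G} (hred : Reduced adj (A ++ s :: B))
    (hex : ExprFor adj G (A ++ s :: B) yv) (hA : ∀ u ∈ A, adj u.1 s.1) :
    IsInitialSyllable adj G yv s := by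
  obtain ⟨i, hi, hg⟩ := initialAt_mk (L := A ++ s :: B) rfl hA
  exact ⟨A ++ s :: B, hred, hex, i, hi, hg⟩

theorem isFinal_of_decomp {xv : GraphProduct adj G} {A B : List (Syllable G)}
    {s : Syllable G} (hred : Reduced adj (A ++ s :: B))
    (hex : ExprFor adj G (A ++ s :: B) xv) (hB : ∀ u ∈ B, adj u.1 s.1) :
    IsFinalSyllable adj G xv s := by
  have hdec : (A ++ s :: B).reverse = B.reverse ++ s :: A.reverse := by simp
  obtain ⟨i, hi, hg⟩ := initialAt_mk (L := (A ++ s :: B).reverse) hdec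
    (fun u hu => hB u (by simpa using hu))
  exact ⟨A ++ s :: B, hred, hex, i, hi, hg⟩

theorem qi_of_isInitial {yv : GraphProduct adj G} {s : Syllable G}
    (h : IsInitialSyllable adj G yv s) :
    ∃ L, Reduced adj L ∧ ExprFor adj G L yv ∧ QI adj s.1 L := by
  obtain ⟨L, hred, hex, i, hi, hg⟩ := h
  obtain ⟨A, B, hdec, hA⟩ := decomp_of_initialAt hi
  rw [hg] at hdec hA
  exact ⟨L, hred, hex, A, s, B, hdec, rfl, hA⟩

theorem adj_of_qi_qi (hsymm : Symmetric adj) {I J : Λ} (hIJ : I ≠ J)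
    {L : List (Syllable G)} (hI : QI adj I L) (hJ : QI adj J L) : adj I J := by
  obtain ⟨A, s, B, rfl, hs, hA⟩ := hI
  obtain ⟨A', s', B', hL, hs', hA'⟩ := hJ
  rcases append_eq_append_iff.mp hL with ⟨e, hA'e, he⟩ | ⟨e, hAe, he⟩
  · cases e with
    | nil =>
      simp only [nil_append, cons.injEq] at he
      obtain ⟨hss', -⟩ := he
      exact absurd (show I = J by rw [← hs, hss', hs']) hIJ
    | cons w e =>
      simp only [cons_append, cons.injEq] at he
      obtain ⟨hw, -⟩ := he
      have : adj s.1 J := by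
        apply hA'
        rw [hA'e, ← hw]
        exact mem_append_right _ (mem_cons_self)
      rw [hs] at this
      exact this
  · cases e with
    | nil =>
      simp only [nil_append, cons.injEq] at he
      obtain ⟨hss', -⟩ := he
      exact absurd (show I = J by rw [← hs, ← hss', hs']) hIJ
    | cons w e =>
      simp only [cons_append, cons.injEq] at he
      obtain ⟨hw, -⟩ := he
      have : adj s'.1 I := by
        apply hA
        rw [hAe, ← hw]
        exact mem_append_right _ (mem_cons_self)
      rw [hs'] at this
      exact hsymm this

/-- Two distinct initial vertices of the same element are adjacent. -/
theorem initialVertex_adj (hsymm : Symmetric adj) (hirr : ∀ I : Λ, ¬ adj I I)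
    {yv : GraphProduct adj G} {I J : Λ} (hIJ : I ≠ J)
    (hI : InitialVertexOf adj G yv I) (hJ : InitialVertexOf adj G yv J) : adj I J := by
  obtain ⟨s, hs, rfl⟩ := hI
  obtain ⟨t, ht, rfl⟩ := hJ
  obtain ⟨L1, hred1, hex1, hqi1⟩ := qi_of_isInitial hs
  obtain ⟨L2, hred2, hex2, hqi2⟩ := qi_of_isInitial ht
  have hse : ShuffleEquiv adj L2 L1 :=
    green hsymm hirr ((reduced_iff_not_collapsible hsymm).mp hred2)
      ((reduced_iff_not_collapsible hsymm).mp hred1)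
      (hex2.trans hex1.symm)
  exact adj_of_qi_qi hsymm hIJ hqi1 (qi_se hsymm hse hqi2)

/-! ### sylList lemmas -/

theorem sylList_eq_pmap {Ds : List Λ} {f : ∀ I : Λ, G I} {h : ∀ I ∈ Ds, f I ≠ 1} :
    sylList Ds f h = Ds.pmap (fun I hI => (⟨I, ⟨f I, hI⟩⟩ : Syllable G)) h := by
  unfold sylList
  rw [pmap_eq_map_attach]
  rfl

theorem mem_sylList {Ds : List Λ} {f : ∀ I : Λ, G I} {h : ∀ I ∈ Ds, f I ≠ 1}
    {t : Syllable G} (ht : t ∈ sylList Ds f h) :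
    ∃ (I : Λ) (hI : I ∈ Ds), t = ⟨I, ⟨f I, h I hI⟩⟩ := by
  rw [sylList_eq_pmap] at ht
  replace ht := mem_pmap.mp ht
  obtain ⟨I, hI, he⟩ := ht
  exact ⟨I, hI, he.symm⟩

theorem sylList_decomp {D1 D2 : List Λ} {I : Λ} {f : ∀ I : Λ, G I}
    {h : ∀ J ∈ D1 ++ I :: D2, f J ≠ 1} :
    sylList (D1 ++ I :: D2) f h =
      sylList D1 f (fun J hJ => h J (mem_append_left _ hJ)) ++
        ⟨I, ⟨f I, h I (mem_append_right _ (mem_cons_self))⟩⟩ ::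
          sylList D2 f (fun J hJ => h J (mem_append_right _ (mem_cons_of_mem _ hJ))) := by
  rw [sylList_eq_pmap, pmap_append]
  congr 1
  · rw [sylList_eq_pmap]
  · rw [sylList_eq_pmap]
    rfl

theorem evalWord_sylList {Ds : List Λ} {f : ∀ I : Λ, G I} {h : ∀ I ∈ Ds, f I ≠ 1} :
    evalWord adj G (sylList Ds f h) = (Ds.map fun I => mkOf adj G (f I)).prod := by
  rw [evalWord, sylList]
  refine (congrArg List.prod (map_map ..)).trans ?_
  congr 1
  exact attach_map_val (l := Ds) (f := fun I => mkOf adj G (f I))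

theorem evalWord_append (L M : List (Syllable G)) :
    evalWord adj G (L ++ M) = evalWord adj G L * evalWord adj G M := by
  rw [evalWord, evalWord, evalWord, map_append, prod_append]

theorem mkOf_commute {I J : Λ} (hadj : adj I J) (p : G I) (q : G J) :
    Commute (mkOf adj G p) (mkOf adj G q) := by
  have h1 : mkOf adj G p * mkOf adj G q * (mkOf adj G p)⁻¹ * (mkOf adj G q)⁻¹ = 1 := by
    have he : mkOf adj G p * mkOf adj G q * (mkOf adj G p)⁻¹ * (mkOf adj G q)⁻¹
        = QuotientGroup.mk (Monoid.CoprodI.of p * Monoid.CoprodI.of q *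
            (Monoid.CoprodI.of p)⁻¹ * (Monoid.CoprodI.of q)⁻¹) := rfl
    rw [he]
    refine (QuotientGroup.eq_one_iff _).mpr ?_
    exact Subgroup.subset_normalClosure ⟨I, J, p, q, hadj, rfl⟩
  rw [← commutatorElement_eq_one_iff_commute]
  rw [commutatorElement_def]
  exact h1

theorem list_prod_interchange {H : Type*} [Group H] (c d : Λ → H) :
    ∀ l : List Λ, l.Nodup →
      (∀ I ∈ l, ∀ J ∈ l, I ≠ J → Commute (d I) (c J)) →
      (l.map fun I => c I * d I).prod = (l.map c).prod * (l.map d).prod := by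
  intro l
  induction l with
  | nil => intro _ _; simp
  | cons I l ih =>
    intro hnd hcomm
    have hIl : I ∉ l := (nodup_cons.mp hnd).1
    have hrec := ih (nodup_cons.mp hnd).2
      (fun a ha b hb hab => hcomm a (mem_cons_of_mem _ ha) b (mem_cons_of_mem _ hb) hab)
    simp only [map_cons, prod_cons]
    rw [hrec]
    have hdI : Commute (d I) ((l.map c).prod) := by
      apply Commute.list_prod_right
      intro b hb
      obtain ⟨J, hJ, rfl⟩ := mem_map.mp hb
      exact hcomm I (mem_cons_self) J (mem_cons_of_mem _ hJ)
        (fun h => hIl (h ▸ hJ))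
    calc c I * d I * ((l.map c).prod * (l.map d).prod)
        = c I * (d I * (l.map c).prod) * (l.map d).prod := by group
      _ = c I * ((l.map c).prod * d I) * (l.map d).prod := by rw [hdI.eq]
      _ = c I * (l.map c).prod * (d I * (l.map d).prod) := by group

end GPAux
namespace GPAux

open List

variable {Λ : Type u} {G : Λ → Type v} [∀ I, Group (G I)] {adj : Λ → Λ → Prop}

theorem mem_sylList_self {Ds : List Λ} {f : ∀ I : Λ, G I} {h : ∀ I ∈ Ds, f I ≠ 1}
    {I : Λ} (hI : I ∈ Ds) : (⟨I, ⟨f I, h I hI⟩⟩ : Syllable G) ∈ sylList Ds f h := by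
  rw [sylList_eq_pmap]
  exact mem_pmap.mpr ⟨I, hI, rfl⟩

theorem sylList_map_fst {Ds : List Λ} {f : ∀ I : Λ, G I} {h : ∀ I ∈ Ds, f I ≠ 1} :
    (sylList Ds f h).map Sigma.fst = Ds := by
  rw [sylList_eq_pmap, map_pmap]
  rw [pmap_eq_map h]
  exact map_id _

theorem mkOf_mul {I : Λ} (p q : G I) :
    mkOf adj G (p * q) = mkOf adj G p * mkOf adj G q := by
  unfold mkOf
  rw [map_mul]
  rfl

theorem list_locate {α : Type*} {U V P Q : List α} {s : α}
    (h : U ++ V = P ++ s :: Q) :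
    (∃ Q', U = P ++ s :: Q' ∧ Q = Q' ++ V) ∨
      (∃ P', V = P' ++ s :: Q ∧ P = U ++ P') := by
  rcases List.append_eq_append_iff.mp h with ⟨e, hP, hV⟩ | ⟨e, hU, he⟩
  · exact Or.inr ⟨e, hV, hP⟩
  · cases e with
    | nil =>
      simp only [nil_append] at he
      simp only [append_nil] at hU
      exact Or.inr ⟨[], by rw [← he]; rfl, by rw [hU]; simp⟩
    | cons w e =>
      simp only [cons_append, List.cons.injEq] at he
      obtain ⟨rfl, hQ⟩ := he
      exact Or.inl ⟨e, hU, hQ⟩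

theorem prod_reorder {H : Type*} [Group H] (c : Λ → H) {l l' : List Λ}
    (hl : l.Nodup) (hl' : l'.Nodup) (hmem : ∀ I, I ∈ l ↔ I ∈ l')
    (hcomm : ∀ I ∈ l, ∀ J ∈ l, Commute (c I) (c J)) :
    (l.map c).prod = (l'.map c).prod := by
  have hp : l.Perm l' := (perm_ext_iff_of_nodup hl hl').mpr hmem
  refine (hp.map c).prod_eq' ?_
  apply pairwise_of_forall_mem_list
  intro p hp' q hq'
  obtain ⟨I, hI, rfl⟩ := mem_map.mp hp'
  obtain ⟨J, hJ, rfl⟩ := mem_map.mp hq'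
  exact hcomm I hI J hJ

end GPAux
namespace GPAux

open List

variable {Λ : Type u} {G : Λ → Type v} [∀ I, Group (G I)] {adj : Λ → Λ → Prop}

theorem sylList_split {l : List Λ} {f : ∀ I : Λ, G I} {h : ∀ I ∈ l, f I ≠ 1}
    {I : Λ} (hnd : l.Nodup) (hI : I ∈ l) :
    ∃ (A1 : List (Syllable G)) (w : Syllable G) (A2 : List (Syllable G)),
      sylList l f h = A1 ++ w :: A2 ∧ w.1 = I ∧
        ∀ u ∈ A1 ++ A2, u.1 ∈ l ∧ u.1 ≠ I := by
  obtain ⟨l1, l2, rfl⟩ := List.append_of_mem hI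
  have hnd' := hnd
  rw [nodup_middle, nodup_cons] at hnd'
  refine ⟨_, _, _, sylList_decomp, rfl, ?_⟩
  intro u hu
  rcases mem_append.mp hu with hu | hu
  · obtain ⟨J, hJ, rfl⟩ := mem_sylList hu
    exact ⟨mem_append_left _ hJ, fun he => hnd'.1 (mem_append_left _ (he ▸ hJ))⟩
  · obtain ⟨J, hJ, rfl⟩ := mem_sylList hu
    exact ⟨mem_append_right _ (mem_cons_of_mem _ hJ),
      fun he => hnd'.1 (mem_append_right _ (he ▸ hJ))⟩

theorem collapsible_construct {L P Mid Q : List (Syllable G)} {s t : Syllable G}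
    (hL : L = P ++ s :: (Mid ++ t :: Q)) (hts : t.1 = s.1)
    (hM : ∀ u ∈ Mid, adj u.1 s.1) : Collapsible adj L :=
  ⟨P, s, Mid ++ t :: Q, hL, Mid, t, Q, rfl, hts, hM⟩

end GPAux

open GPAux List in
/-- Lemma `XZY`. -/
theorem reduced_expression_of_product {Λ : Type u} (adj : Λ → Λ → Prop)
    (hsymm : Symmetric adj) (hirr : ∀ I : Λ, ¬ adj I I)
    (G : Λ → Type v) [∀ I, Group (G I)]
    (x y : GraphProduct adj G)
    (Ds Es Fs : List Λ) (hDnd : Ds.Nodup) (hEnd : Es.Nodup) (hFnd : Fs.Nodup)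
    (hD : ∀ I : Λ, I ∈ Ds ↔ (FinalVertexOf adj G x I ∧ InitialVertexOf adj G y I))
    (hE : ∀ I : Λ, I ∈ Es ↔ I ∈ Ds) (hF : ∀ I : Λ, I ∈ Fs ↔ I ∈ Ds)
    (a b : ∀ I : Λ, G I)
    (ha1 : ∀ I ∈ Ds, a I ≠ 1) (hb1 : ∀ I ∈ Es, b I ≠ 1)
    (ha : ∀ (I : Λ) (h : I ∈ Ds), IsFinalSyllable adj G x ⟨I, ⟨a I, ha1 I h⟩⟩)
    (hb : ∀ (I : Λ) (h : I ∈ Es), IsInitialSyllable adj G y ⟨I, ⟨b I, hb1 I h⟩⟩)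
    (hz : ∀ I ∈ Fs, a I * b I ≠ 1)
    (X Y : List (Syllable G))
    (hXred : Reduced adj (X ++ sylList Ds a ha1))
    (hXx : ExprFor adj G (X ++ sylList Ds a ha1) x)
    (hYred : Reduced adj (sylList Es b hb1 ++ Y))
    (hYy : ExprFor adj G (sylList Es b hb1 ++ Y) y) :
    Reduced adj (X ++ sylList Fs (fun I => a I * b I) hz ++ Y) ∧
    ExprFor adj G (X ++ sylList Fs (fun I => a I * b I) hz ++ Y) (x * y) := by
  classical
  have hnotX : ¬ Collapsible adj (X ++ sylList Ds a ha1) :=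
    (reduced_iff_not_collapsible hsymm).mp hXred
  have hnotY : ¬ Collapsible adj (sylList Es b hb1 ++ Y) :=
    (reduced_iff_not_collapsible hsymm).mp hYred
  have hadjD : ∀ I ∈ Ds, ∀ J ∈ Ds, I ≠ J → adj I J := fun I hI J hJ hIJ =>
    initialVertex_adj hsymm hirr hIJ ((hD I).mp hI).2 ((hD J).mp hJ).2
  have hFD : ∀ {I}, I ∈ Fs → I ∈ Ds := fun {I} h => (hF _).mp h
  have hDF : ∀ {I}, I ∈ Ds → I ∈ Fs := fun {I} h => (hF _).mpr h
  have hED : ∀ {I}, I ∈ Es → I ∈ Ds := fun {I} h => (hE _).mp h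
  have hDE : ∀ {I}, I ∈ Ds → I ∈ Es := fun {I} h => (hE _).mpr h
  -- ## Part 1: evaluation
  have heval : ExprFor adj G (X ++ sylList Fs (fun I => a I * b I) hz ++ Y) (x * y) := by
    unfold ExprFor at hXx hYy ⊢
    rw [evalWord_append, evalWord_append, evalWord_sylList]
    rw [evalWord_append] at hXx hYy
    rw [evalWord_sylList] at hXx hYy
    have hcommDs : ∀ I ∈ Ds, ∀ J ∈ Ds, I ≠ J → ∀ (p : G I) (q : G J),
        Commute (mkOf adj G p) (mkOf adj G q) := fun I hI J hJ hIJ p q =>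
      mkOf_commute (hadjD I hI J hJ hIJ) p q
    have hmapz : (Fs.map fun I => mkOf adj G (a I * b I))
        = Fs.map (fun I => mkOf adj G (a I) * mkOf adj G (b I)) :=
      map_congr_left (fun I _ => mkOf_mul _ _)
    have hinter : (Fs.map fun I => mkOf adj G (a I) * mkOf adj G (b I)).prod
        = (Fs.map fun I => mkOf adj G (a I)).prod *
            (Fs.map fun I => mkOf adj G (b I)).prod := by
      refine list_prod_interchange _ _ Fs hFnd ?_
      intro I hI J hJ hIJ
      exact hcommDs I (hFD hI) J (hFD hJ) hIJ (b I) (a J)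
    have hac : ∀ I ∈ Fs, ∀ J ∈ Fs, Commute (mkOf adj G (a I)) (mkOf adj G (a J)) := by
      intro I hI J hJ
      by_cases hIJ : I = J
      · subst hIJ; exact Commute.refl _
      · exact hcommDs I (hFD hI) J (hFD hJ) hIJ _ _
    have hbc : ∀ I ∈ Fs, ∀ J ∈ Fs, Commute (mkOf adj G (b I)) (mkOf adj G (b J)) := by
      intro I hI J hJ
      by_cases hIJ : I = J
      · subst hIJ; exact Commute.refl _
      · exact hcommDs I (hFD hI) J (hFD hJ) hIJ _ _
    have hFsDs : (Fs.map fun I => mkOf adj G (a I)).prod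
        = (Ds.map fun I => mkOf adj G (a I)).prod :=
      prod_reorder _ hFnd hDnd hF hac
    have hFsEs : (Fs.map fun I => mkOf adj G (b I)).prod
        = (Es.map fun I => mkOf adj G (b I)).prod :=
      prod_reorder _ hFnd hEnd (fun I => (hF I).trans (hE I).symm) hbc
    rw [hmapz, hinter, hFsDs, hFsEs, ← hXx, ← hYy]
    simp [mul_assoc]
  -- ## Part 2: reducedness
  have hredNC : ¬ Collapsible adj (X ++ sylList Fs (fun I => a I * b I) hz ++ Y) := by
    rintro ⟨P, s, Qf, hdec, P2, t, Q2, hQdec, hts, hP2⟩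
    rw [hQdec] at hdec
    rcases list_locate hdec with ⟨Q', h1, h2⟩ | ⟨P', h1, h2⟩
    swap
    · -- s and t both lie in Y
      exact hnotY (collapsible_append_left _
        ⟨P', s, P2 ++ t :: Q2, h1, P2, t, Q2, rfl, hts, hP2⟩)
    rcases list_locate h1 with ⟨Q'', hX2, hQ'2⟩ | ⟨Pz, hZ2, hP3⟩
    · -- s ∈ X
      rw [hQ'2] at h2
      have h3 := h2.symm
      rcases list_locate h3 with ⟨Q₃, h4, h5⟩ | ⟨Py, h4, h5⟩
      · rcases list_locate h4 with ⟨Q₄, h6, h7⟩ | ⟨P₄, h6, h7⟩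
        · -- t ∈ X as well
          exact hnotX (collapsible_append_right _
            ⟨P, s, Q'', hX2, P2, t, Q₄, h6, hts, hP2⟩)
        · -- t ∈ Z : contradiction with reducedness of X ++ A
          have htmem : t ∈ sylList Fs (fun I => a I * b I) hz := by
            rw [h6]; exact mem_append_right _ (mem_cons_self)
          obtain ⟨J, hJF, htJ⟩ := mem_sylList htmem
          have hJ1 : t.1 = J := by rw [htJ]
          have hsFs : s.1 ∈ Fs := by rw [← hts, hJ1]; exact hJF
          have hsDs : s.1 ∈ Ds := hFD hsFs
          obtain ⟨A1, w, A2, hAdec, hw1, hAmem⟩ :=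
            sylList_split (f := a) (h := ha1) hDnd hsDs
          apply hnotX
          rw [hAdec]
          refine collapsible_construct (P := P) (Mid := Q'' ++ A1) (t := w) (Q := A2)
            (by rw [hX2]; simp) hw1 ?_
          intro u hu
          rcases mem_append.mp hu with hu | hu
          · exact hP2 u (by rw [h7]; exact mem_append_left _ hu)
          · obtain ⟨huD, hune⟩ := hAmem u (mem_append_left _ hu)
            exact hadjD u.1 huD s.1 hsDs hune
      · -- t ∈ Y : show s.1 ∈ D, contradiction
        have hsF : s.1 ∉ Fs := by
          intro hsF
          have hzmem : (⟨s.1, ⟨a s.1 * b s.1, hz s.1 hsF⟩⟩ : Syllable G)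
              ∈ sylList Fs (fun I => a I * b I) hz := mem_sylList_self hsF
          have hmem2 : (⟨s.1, ⟨a s.1 * b s.1, hz s.1 hsF⟩⟩ : Syllable G) ∈ P2 := by
            rw [h5]; exact mem_append_left _ (mem_append_right _ hzmem)
          have h6 := hP2 _ hmem2
          exact hirr s.1 h6
        have hadjA : ∀ u ∈ Q'' ++ sylList Ds a ha1, adj u.1 s.1 := by
          intro u hu
          rcases mem_append.mp hu with hu | hu
          · exact hP2 u (by rw [h5]; exact mem_append_left _ (mem_append_left _ hu))
          · obtain ⟨J', hJ', huJ'⟩ := mem_sylList hu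
            have hzmem : (⟨J', ⟨a J' * b J', hz J' (hDF hJ')⟩⟩ : Syllable G)
                ∈ sylList Fs (fun I => a I * b I) hz := mem_sylList_self (hDF hJ')
            have hmem2 : (⟨J', ⟨a J' * b J', hz J' (hDF hJ')⟩⟩ : Syllable G) ∈ P2 := by
              rw [h5]; exact mem_append_left _ (mem_append_right _ hzmem)
            have := hP2 _ hmem2
            rw [huJ']
            exact this
        have hfin : FinalVertexOf adj G x s.1 := by
          refine ⟨s, ?_, rfl⟩
          have heq : X ++ sylList Ds a ha1 = P ++ s :: (Q'' ++ sylList Ds a ha1) := by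
            rw [hX2]; simp
          rw [heq] at hXred hXx
          exact isFinal_of_decomp hXred hXx hadjA
        have hini : InitialVertexOf adj G y s.1 := by
          refine ⟨t, ?_, hts⟩
          have heq : sylList Es b hb1 ++ Y = (sylList Es b hb1 ++ Py) ++ t :: Q2 := by
            rw [h4]; simp
          rw [heq] at hYred hYy
          refine isInitial_of_decomp hYred hYy ?_
          intro u hu
          rw [hts]
          rcases mem_append.mp hu with hu | hu
          · obtain ⟨J', hJ', huJ'⟩ := mem_sylList hu
            have hJ'F : J' ∈ Fs := hDF (hED hJ')
            have hzmem : (⟨J', ⟨a J' * b J', hz J' hJ'F⟩⟩ : Syllable G)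
                ∈ sylList Fs (fun I => a I * b I) hz := mem_sylList_self hJ'F
            have hmem2 : (⟨J', ⟨a J' * b J', hz J' hJ'F⟩⟩ : Syllable G) ∈ P2 := by
              rw [h5]; exact mem_append_left _ (mem_append_right _ hzmem)
            have := hP2 _ hmem2
            rw [huJ']
            exact this
          · exact hP2 u (by rw [h5]; exact mem_append_right _ hu)
        exact hsF (hDF ((hD s.1).mpr ⟨hfin, hini⟩))
    · -- s ∈ Z
      have hsmem : s ∈ sylList Fs (fun I => a I * b I) hz := by
        rw [hZ2]; exact mem_append_right _ (mem_cons_self)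
      obtain ⟨J, hJF, hsJ⟩ := mem_sylList hsmem
      have hs1 : s.1 = J := by rw [hsJ]
      have hsFs : s.1 ∈ Fs := by rw [hs1]; exact hJF
      have h3 := h2.symm
      rcases list_locate h3 with ⟨Q₃, h4, h5⟩ | ⟨Py, h4, h5⟩
      · -- t ∈ Z too: duplicate vertex in Fs, contradiction
        have hfst : Fs = (sylList Fs (fun I => a I * b I) hz).map Sigma.fst :=
          sylList_map_fst.symm
        rw [hZ2, h4] at hfst
        rw [hfst] at hFnd
        replace hFnd : (map Sigma.fst Pz ++ s.1 :: (map Sigma.fst P2 ++ t.1 :: map Sigma.fst Q₃)).Nodup :=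
          (congrArg List.Nodup ((map_append (f := Sigma.fst) (l₁ := Pz)).trans
            (congrArg (map Sigma.fst Pz ++ ·) (map_append (f := Sigma.fst) (l₁ := s :: P2))))).mp hFnd
        rw [nodup_middle] at hFnd
        apply (nodup_cons.mp hFnd).1
        rw [← hts]
        exact mem_append_right _ (mem_append_right _ (mem_cons_self))
      · -- t ∈ Y : contradiction with reducedness of B ++ Y
        have hsEs : s.1 ∈ Es := hDE (hFD hsFs)
        obtain ⟨B1, w, B2, hBdec, hw1, hBmem⟩ :=
          sylList_split (f := b) (h := hb1) hEnd hsEs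
        apply hnotY
        rw [hBdec, h4]
        refine collapsible_construct (P := B1) (Mid := B2 ++ Py) (t := t) (Q := Q2)
          (by simp) (hts.trans hw1.symm) ?_
        intro u hu
        rw [hw1]
        rcases mem_append.mp hu with hu | hu
        · obtain ⟨huE, hune⟩ := hBmem u (mem_append_right _ hu)
          exact hadjD u.1 (hED huE) s.1 (hFD hsFs) hune
        · exact hP2 u (by rw [h5]; exact mem_append_right _ hu)
  exact ⟨(reduced_iff_not_collapsible hsymm).mpr hredNC, heval⟩
end

section
/- For a partially ordered group (G,P) the following statements are equivalent: (i) (G,P) is quasi-lattice ordered, i.e. every pair x, y ∈ G with a common upper bound in G has a least upper bound; (ii) every finite subset of G with a common upper bound in P has a least upper bound in P; (iii) every element x of G having an upper bound in P has a least upper bound in P; (iv) for every x ∈ PP⁻¹ there exists a pair a, b ∈ P with x = ab⁻¹ such that for every u, v ∈ P with x = uv⁻¹ one has a ≤ u and b ≤ v; (v) every pair u, v ∈ P has a greatest lower bound u ∧ᵣ v in G with respect to the right-invariant partial order; (vi) for every x ∈ PP⁻¹ there exists a pair a, b ∈ P with x = ab⁻¹ and a ∧ᵣ b = 1. -/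
/-!
Left translations preserve `≤`, right translations preserve `≤ᵣ`, and inversion turns `≤ᵣ`
into the reverse of `≤`; so a `≤ᵣ`-greatest lower bound of `u, v` is the inverse of a least
upper bound of `u⁻¹, v⁻¹`, and translating by a common upper bound `z` of `x, y` reduces a
least upper bound of `x, y` to a `≤ᵣ`-greatest lower bound of `x⁻¹z, y⁻¹z ∈ P`.
Decompositions `x = uv⁻¹` with `u, v ∈ P` are the same as upper bounds `u ∈ P` of `x`
(with `v = x⁻¹u`), so a least upper bound of `x` in `P` is a minimal decomposition; and a
minimal decomposition `(a, b)` has `a ∧ᵣ b = 1`, because a common `≤ᵣ`-lower bound `z` of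
`a, b` gives the decomposition `x = (az⁻¹)(bz⁻¹)⁻¹`.
-/

section QuasiLattice

variable {H : Type*} [Group H] {P : Submonoid H} {x y z u v w a b m : H}

theorem lle_trans (hxy : lle P x y) (hyz : lle P y z) : lle P x z := by
  simpa [lle, mul_assoc] using P.mul_mem hxy hyz

theorem lle_one_left : lle P 1 x ↔ x ∈ P := by
  simp [lle]

theorem lle_mul_left_iff (g : H) : lle P (g * x) (g * y) ↔ lle P x y := by
  simp [lle, mul_assoc]

theorem lle_mul_left_iff_lle_inv_mul (g : H) : lle P (g * x) y ↔ lle P x (g⁻¹ * y) := by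
  simp [lle, mul_assoc]

theorem lle_iff_of_eq_mul_inv (h : x = u * v⁻¹) : lle P x u ↔ v ∈ P := by
  rw [lle, inv_mul_eq_of_eq_mul (eq_mul_inv_iff_mul_eq.1 h).symm]

theorem rle_iff_lle_inv : rle P x y ↔ lle P y⁻¹ x⁻¹ := by
  simp [rle, lle]

theorem rle_one_left : rle P 1 x ↔ x ∈ P := by
  simp [rle]

theorem rle_one_right : rle P x 1 ↔ x⁻¹ ∈ P := by
  simp [rle]

theorem rle_mul_right_iff_rle_mul_inv (g : H) : rle P x (y * g) ↔ rle P (x * g⁻¹) y := by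
  simp [rle, mul_assoc]

theorem IsLub'.mul_left (h : IsLub' P x y m) (g : H) : IsLub' P (g * x) (g * y) (g * m) := by
  obtain ⟨hxm, hym, hmin⟩ := h
  refine ⟨(lle_mul_left_iff g).2 hxm, (lle_mul_left_iff g).2 hym, fun w hxw hyw => ?_⟩
  rw [lle_mul_left_iff_lle_inv_mul] at hxw hyw ⊢
  exact hmin _ hxw hyw

theorem IsRGlb.mul_right (h : IsRGlb P u v w) (g : H) : IsRGlb P (u * g) (v * g) (w * g) := by
  obtain ⟨hwu, hwv, hmax⟩ := h
  refine ⟨(rle_mul_right_iff_rle_mul_inv g).2 (by simpa using hwu),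
    (rle_mul_right_iff_rle_mul_inv g).2 (by simpa using hwv), fun z hzu hzv => ?_⟩
  rw [rle_mul_right_iff_rle_mul_inv] at hzu hzv ⊢
  exact hmax _ hzu hzv

theorem isRGlb_iff_isLub'_inv : IsRGlb P u v w ↔ IsLub' P u⁻¹ v⁻¹ w⁻¹ := by
  simp only [IsRGlb, IsLub', rle_iff_lle_inv]
  exact and_congr_right fun _ => and_congr_right fun _ => ⟨fun h z => by simpa using h z⁻¹, fun h z => h z⁻¹⟩

theorem exists_lub_finset_of_forall_hasUB (h : ∀ x y : H, HasUB P x y → ∃ m, IsLub' P x y m)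
    (F : Finset H) (hF : ∃ p ∈ P, ∀ x ∈ F, lle P x p) :
    ∃ m ∈ P, (∀ x ∈ F, lle P x m) ∧ ∀ w ∈ P, (∀ x ∈ F, lle P x w) → lle P m w := by
  classical
  induction F using Finset.induction_on with
  | empty => exact ⟨1, P.one_mem, by simp, fun w hw _ => lle_one_left.2 hw⟩
  | insert x F _ ih =>
    obtain ⟨p, hp, hxp, hFp⟩ : ∃ p ∈ P, lle P x p ∧ ∀ y ∈ F, lle P y p := by
      simpa only [Finset.forall_mem_insert] using hF
    simp only [Finset.forall_mem_insert]
    obtain ⟨m, hm, hFm, hmin⟩ := ih ⟨p, hp, hFp⟩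
    obtain ⟨n, hxn, hmn, hnmin⟩ := h x m ⟨p, hxp, hmin p hp hFp⟩
    exact ⟨n, lle_one_left.1 (lle_trans (lle_one_left.2 hm) hmn),
      ⟨hxn, fun y hy => lle_trans (hFm y hy) hmn⟩,
      fun w hw hFw => hnmin w hFw.1 (hmin w hw hFw.2)⟩

theorem minimal_mul_inv_of_lub (hxm : lle P x m)
    (hmin : ∀ w ∈ P, lle P x w → lle P m w) :
    x⁻¹ * m ∈ P ∧ x = m * (x⁻¹ * m)⁻¹ ∧
      ∀ u v : H, u ∈ P → v ∈ P → x = u * v⁻¹ → lle P m u ∧ lle P (x⁻¹ * m) v := by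
  refine ⟨hxm, by group, fun u v hu hv hx => ?_⟩
  have hmu := hmin u hu ((lle_iff_of_eq_mul_inv hx).2 hv)
  refine ⟨hmu, ?_⟩
  rw [← inv_mul_eq_of_eq_mul (eq_mul_inv_iff_mul_eq.1 hx).symm]
  exact (lle_mul_left_iff x⁻¹).2 hmu

theorem isRGlb_one_of_minimal (ha : a ∈ P) (hb : b ∈ P)
    (hmin : ∀ u v : H, u ∈ P → v ∈ P → a * b⁻¹ = u * v⁻¹ → lle P a u ∧ lle P b v) :
    IsRGlb P a b 1 := by
  refine ⟨rle_one_left.2 ha, rle_one_left.2 hb, fun z hza hzb => rle_one_right.2 ?_⟩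
  simpa [lle] using (hmin (a * z⁻¹) (b * z⁻¹) hza hzb (by group)).1

theorem IsRGlb.of_mul_inv_eq (h : IsRGlb P a b 1) (huv : u * v⁻¹ = a * b⁻¹) :
    IsRGlb P u v (a⁻¹ * u) := by
  have hv : b * (a⁻¹ * u) = v :=
    calc b * (a⁻¹ * u) = (a * b⁻¹)⁻¹ * u := by group
      _ = v := by rw [← huv]; group
  simpa [hv] using h.mul_right (a⁻¹ * u)

theorem IsRGlb.isLub'_mul_inv (h : IsRGlb P (x⁻¹ * z) (y⁻¹ * z) w) :
    IsLub' P x y (z * w⁻¹) := by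
  simpa using (isRGlb_iff_isLub'_inv.1 h).mul_left z

end QuasiLattice

theorem quasiLattice_tfae_general {H : Type*} [Group H] (P : Submonoid H) :
    [ (∀ x y : H, HasUB P x y → ∃ m, IsLub' P x y m),
      (∀ F : Finset H, (∃ p ∈ P, ∀ x ∈ F, lle P x p) →
        ∃ m ∈ P, (∀ x ∈ F, lle P x m) ∧ ∀ w ∈ P, (∀ x ∈ F, lle P x w) → lle P m w),
      (∀ x : H, (∃ p ∈ P, lle P x p) →
        ∃ m ∈ P, lle P x m ∧ ∀ w ∈ P, lle P x w → lle P m w),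
      (∀ x : H, (∃ u ∈ P, ∃ v ∈ P, x = u * v⁻¹) →
        ∃ a ∈ P, ∃ b ∈ P, x = a * b⁻¹ ∧
          ∀ u v : H, u ∈ P → v ∈ P → x = u * v⁻¹ → lle P a u ∧ lle P b v),
      (∀ u v : H, u ∈ P → v ∈ P → ∃ w, IsRGlb P u v w),
      (∀ x : H, (∃ u ∈ P, ∃ v ∈ P, x = u * v⁻¹) →
        ∃ a ∈ P, ∃ b ∈ P, x = a * b⁻¹ ∧ IsRGlb P a b 1) ].TFAE := by
  tfae_have 1 → 2 := exists_lub_finset_of_forall_hasUB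
  tfae_have 2 → 3 := by
    rintro h2 x ⟨p, hp, hxp⟩
    simpa using h2 {x} ⟨p, hp, by simpa using hxp⟩
  tfae_have 3 → 4 := by
    rintro h3 x ⟨u, hu, v, hv, rfl⟩
    obtain ⟨m, hm, hxm, hmin⟩ := h3 _ ⟨u, hu, (lle_iff_of_eq_mul_inv rfl).2 hv⟩
    exact ⟨m, hm, _, minimal_mul_inv_of_lub hxm hmin⟩
  tfae_have 4 → 6 := by
    intro h4 x hx
    obtain ⟨a, ha, b, hb, rfl, hmin⟩ := h4 x hx
    exact ⟨a, ha, b, hb, rfl, isRGlb_one_of_minimal ha hb hmin⟩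
  tfae_have 6 → 5 := by
    intro h6 u v hu hv
    obtain ⟨a, ha, b, hb, huv, hab⟩ := h6 (u * v⁻¹) ⟨u, hu, v, hv, rfl⟩
    exact ⟨_, hab.of_mul_inv_eq huv⟩
  tfae_have 5 → 1 := by
    rintro h5 x y ⟨z, hxz, hyz⟩
    obtain ⟨w, hw⟩ := h5 _ _ hxz hyz
    exact ⟨_, hw.isLub'_mul_inv⟩
  tfae_finish

/-- Lemma 3.2. For a partially ordered group `(H,P)` the following are
equivalent: (i) `(H,P)` is quasi-lattice ordered; (ii) every finite subset of `H` with a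
common upper bound in `P` has a least upper bound in `P`; (iii) every element of `H` with
an upper bound in `P` has a least upper bound in `P`; (iv) every `x ∈ PP⁻¹` can be
written `x = ab⁻¹` with `a, b ∈ P` minimal, i.e. `a ≤ u` and `b ≤ v` whenever
`x = uv⁻¹` with `u, v ∈ P`; (v) every pair of elements of `P` has a greatest lower bound
for the right-invariant order; (vi) every `x ∈ PP⁻¹` can be written `x = ab⁻¹` with
`a, b ∈ P` and `a ∧ᵣ b = 1`. -/
theorem quasiLattice_tfae {H : Type*} [Group H] (P : Submonoid H)
    (hpo : IsPoGroup P) :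
    [ (∀ x y : H, HasUB P x y → ∃ m, IsLub' P x y m),
      (∀ F : Finset H, (∃ p ∈ P, ∀ x ∈ F, lle P x p) →
        ∃ m ∈ P, (∀ x ∈ F, lle P x m) ∧ ∀ w ∈ P, (∀ x ∈ F, lle P x w) → lle P m w),
      (∀ x : H, (∃ p ∈ P, lle P x p) →
        ∃ m ∈ P, lle P x m ∧ ∀ w ∈ P, lle P x w → lle P m w),
      (∀ x : H, (∃ u ∈ P, ∃ v ∈ P, x = u * v⁻¹) →
        ∃ a ∈ P, ∃ b ∈ P, x = a * b⁻¹ ∧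
          ∀ u v : H, u ∈ P → v ∈ P → x = u * v⁻¹ → lle P a u ∧ lle P b v),
      (∀ u v : H, u ∈ P → v ∈ P → ∃ w, IsRGlb P u v w),
      (∀ x : H, (∃ u ∈ P, ∃ v ∈ P, x = u * v⁻¹) →
        ∃ a ∈ P, ∃ b ∈ P, x = a * b⁻¹ ∧ IsRGlb P a b 1) ].TFAE :=
  quasiLattice_tfae_general P
end

section
/- Let G = Γ_{I∈Λ} G_I be a graph product of groups in which each G_I is partially ordered with positive cone P_I, and let P be the submonoid of G generated by ∪_{I∈Λ} P_I. Then: an element x ∈ G lies in P if and only if every reduced expression for x is positive (equivalently, some reduced expression for x is positive); P ∩ P⁻¹ = {1}, so (G,P) is a partially ordered group; and two positive elements are equal in G if and only if their reduced expressions are shuffle equivalent, so that P is isomorphic as a monoid to the monoid graph product Γ_{I∈Λ} P_I, i.e. the quotient of the free product of monoids ∗_{I∈Λ} P_I by the relations xy = yx for x ∈ P_I, y ∈ P_J with I adjacent to J. -/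
universe u v

/-- A reduced expression is positive (with respect to the cones `Pc`) if every syllable
lies in the positive cone of its vertex group. -/
def PositiveWord {Λ : Type u} {G : Λ → Type v} [∀ I, Group (G I)]
    (Pc : ∀ I, Submonoid (G I)) (L : List (Syllable G)) : Prop :=
  ∀ s ∈ L, s.2.1 ∈ Pc s.1

/-- The graph product of a family of monoids: the quotient of their free product by the
congruence generated by letting elements at adjacent vertices commute. -/
def MonoidGraphProduct {Λ : Type u} (adj : Λ → Λ → Prop) (M : Λ → Type v)
    [∀ I, Monoid (M I)] : Type (max u v) :=
  (conGen fun m n : Monoid.CoprodI M =>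
    ∃ (I J : Λ) (x : M I) (y : M J), adj I J ∧
      m = Monoid.CoprodI.of x * Monoid.CoprodI.of y ∧
      n = Monoid.CoprodI.of y * Monoid.CoprodI.of x).Quotient

instance {Λ : Type u} (adj : Λ → Λ → Prop) (M : Λ → Type v) [∀ I, Monoid (M I)] :
    Monoid (MonoidGraphProduct adj M) :=
  inferInstanceAs (Monoid (Con.Quotient _))

/-- The canonical image in the monoid graph product of an element of one of the
monoids. -/
def mgpOf {Λ : Type u} (adj : Λ → Λ → Prop) {M : Λ → Type v} [∀ I, Monoid (M I)]
    {I : Λ} (p : M I) : MonoidGraphProduct adj M :=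
  Con.mk' _ (Monoid.CoprodI.of p)


/-! ### Auxiliary development -/

open Relation List

section ListLemmas

variable {Λ : Type u} {G : Λ → Type v} [∀ I, Group (G I)] {adj : Λ → Λ → Prop}

theorem ShuffleStep.cons {a : Syllable G} {L L' : List (Syllable G)}
    (h : ShuffleStep adj L L') : ShuffleStep adj (a :: L) (a :: L') := by
  obtain ⟨A, B, s, t, hadj, rfl, rfl⟩ := h
  exact ⟨a :: A, B, s, t, hadj, rfl, rfl⟩

theorem ShuffleEquiv.cons (a : Syllable G) {L L' : List (Syllable G)}
    (h : ShuffleEquiv adj L L') : ShuffleEquiv adj (a :: L) (a :: L') :=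
  Relation.ReflTransGen.lift _ (fun _ _ h => ShuffleStep.cons h) _ _ h

theorem ShuffleEquiv.append_left (A : List (Syllable G)) {L L' : List (Syllable G)}
    (h : ShuffleEquiv adj L L') : ShuffleEquiv adj (A ++ L) (A ++ L') := by
  induction A with
  | nil => exact h
  | cons a A ih => exact ih.cons a

theorem shuffleStep_symm (hs : Symmetric adj) {L L' : List (Syllable G)}
    (h : ShuffleStep adj L L') : ShuffleStep adj L' L := by
  obtain ⟨A, B, s, t, hadj, rfl, rfl⟩ := h
  exact ⟨A, B, t, s, hs hadj, rfl, rfl⟩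

theorem ShuffleEquiv.symm (hs : Symmetric adj) {L L' : List (Syllable G)}
    (h : ShuffleEquiv adj L L') : ShuffleEquiv adj L' L :=
  (@Relation.ReflTransGen.stdSymm _ _ ⟨fun _ _ h => shuffleStep_symm hs h⟩).symm _ _ h

theorem ShuffleEquiv.perm {L L' : List (Syllable G)} (h : ShuffleEquiv adj L L') :
    L.Perm L' := by
  induction h with
  | refl => exact List.Perm.refl _
  | tail _ step ih =>
    obtain ⟨A, B, s, t, _, rfl, rfl⟩ := step
    exact ih.trans (List.Perm.append_left A (List.Perm.swap t s B))

theorem shuffleEquiv_nil {L : List (Syllable G)} (h : ShuffleEquiv adj [] L) : L = [] := by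
  induction h with
  | refl => rfl
  | tail _ step ih =>
    subst ih
    obtain ⟨A, B, s, t, _, hL, _⟩ := step
    cases A <;> simp at hL

/-- Case analysis for a cons-position inside a word containing a contiguous pair. -/
theorem cons_middle_split {A B C D : List (Syllable G)} {a s t : Syllable G}
    (h : A ++ a :: B = C ++ s :: t :: D) :
    (∃ C', C = A ++ a :: C' ∧ B = C' ++ s :: t :: D) ∨
    (A = C ∧ a = s ∧ B = t :: D) ∨
    (A = C ++ [s] ∧ a = t ∧ B = D) ∨
    (∃ A', A = C ++ s :: t :: A' ∧ D = A' ++ a :: B) := by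
  induction C generalizing A with
  | nil =>
    match A, h with
    | [], h =>
      simp only [List.nil_append, List.cons.injEq] at h
      exact Or.inr (Or.inl ⟨rfl, h.1, h.2⟩)
    | [x], h =>
      simp only [List.cons_append, List.nil_append, List.cons.injEq] at h
      exact Or.inr (Or.inr (Or.inl ⟨by simp [h.1], h.2.1, h.2.2⟩))
    | x :: y :: A'', h =>
      simp only [List.cons_append, List.nil_append, List.cons.injEq] at h
      exact Or.inr (Or.inr (Or.inr ⟨A'', by simp [h.1, h.2.1], h.2.2.symm⟩))
  | cons c C₂ ih =>
    match A, h with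
    | [], h =>
      simp only [List.nil_append, List.cons_append, List.cons.injEq] at h
      exact Or.inl ⟨C₂, by simp [h.1], h.2⟩
    | x :: A₂, h =>
      simp only [List.cons_append, List.cons.injEq] at h
      obtain ⟨rfl, h2⟩ := h
      rcases ih h2 with ⟨C', rfl, hB⟩ | ⟨rfl, ha, hB⟩ | ⟨hA, ha, hB⟩ | ⟨A', hA, hD⟩
      · exact Or.inl ⟨C', by simp, hB⟩
      · exact Or.inr (Or.inl ⟨rfl, ha, hB⟩)
      · exact Or.inr (Or.inr (Or.inl ⟨by simp [hA], ha, hB⟩))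
      · exact Or.inr (Or.inr (Or.inr ⟨A', by simp [hA], hD⟩))

/-- Key structural lemma: if `a :: u` is shuffle equivalent to `w`, then `w` decomposes
as `A ++ a :: B` where `a` is adjacent to everything in `A`, and `u ~ A ++ B`. -/
theorem pull_decomp {a : Syllable G} {u w : List (Syllable G)}
    (h : ShuffleEquiv adj (a :: u) w) :
    ∃ A B, w = A ++ a :: B ∧ (∀ t ∈ A, adj a.1 t.1) ∧ ShuffleEquiv adj u (A ++ B) := by
  induction h with
  | refl => exact ⟨[], u, rfl, by simp, ReflTransGen.refl⟩
  | tail _ step ih =>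
    obtain ⟨A, B, rfl, hadjA, hu⟩ := ih
    obtain ⟨C, D, s, t, hst, heq, rfl⟩ := step
    rcases cons_middle_split heq with ⟨C', rfl, rfl⟩ | ⟨rfl, ha, rfl⟩ | ⟨hA, ha, hB⟩ |
      ⟨A', rfl, rfl⟩
    · refine ⟨A, C' ++ t :: s :: D, by simp, hadjA, hu.trans ?_⟩
      exact ReflTransGen.single ⟨A ++ C', D, s, t, hst, by simp, by simp⟩
    · subst ha
      refine ⟨A ++ [t], D, by simp, ?_, ?_⟩
      · intro x hx
        rcases List.mem_append.1 hx with hx | hx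
        · exact hadjA x hx
        · simp only [List.mem_singleton] at hx; subst hx; exact hst
      · simpa using hu
    · refine ⟨C, s :: B, by simp [ha, hB], ?_, by simpa [hA, hB] using hu⟩
      intro x hx
      exact hadjA x (by simp [hA, hx])
    · refine ⟨C ++ t :: s :: A', B, by simp, ?_, hu.trans ?_⟩
      · intro x hx
        apply hadjA
        simp only [List.mem_append, List.mem_cons] at hx ⊢
        tauto
      · exact ReflTransGen.single ⟨C, A' ++ B, s, t, hst, by simp, by simp⟩

theorem pull_through (hs : Symmetric adj) {a : Syllable G} {A B : List (Syllable G)}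
    (hadj : ∀ t ∈ A, adj a.1 t.1) :
    ShuffleEquiv adj (A ++ a :: B) (a :: (A ++ B)) := by
  induction A with
  | nil => exact ReflTransGen.refl
  | cons c A' ih =>
    have h0 : ShuffleEquiv adj (A' ++ a :: B) (a :: (A' ++ B)) := by
      apply ih
      intro t ht
      exact hadj t (by simp [ht])
    have h1 : ShuffleEquiv adj (c :: (A' ++ a :: B)) (c :: a :: (A' ++ B)) :=
      h0.cons c
    exact h1.trans (ReflTransGen.single
      ⟨[], A' ++ B, c, a, hs (hadj c (by simp)), rfl, rfl⟩)

theorem cons_equiv_cons (hirr : ∀ I : Λ, ¬ adj I I) {a b : Syllable G}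
    {u v : List (Syllable G)} (hab : a.1 = b.1)
    (h : ShuffleEquiv adj (a :: u) (b :: v)) : a = b ∧ ShuffleEquiv adj u v := by
  obtain ⟨A, B, hw, hadjA, hu⟩ := pull_decomp h
  cases A with
  | nil =>
    simp only [List.nil_append, List.cons.injEq] at hw
    obtain ⟨hba, hvB⟩ := hw
    exact ⟨hba.symm, hvB ▸ hu⟩
  | cons c A' =>
    exfalso
    simp only [List.cons_append, List.cons.injEq] at hw
    have h2 := hadjA c (by simp)
    rw [hw.1.symm, ← hab] at h2
    exact hirr a.1 h2

theorem cons_equiv_cons_ne (hs : Symmetric adj) {a b : Syllable G}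
    {u v : List (Syllable G)} (hab : a.1 ≠ b.1)
    (h : ShuffleEquiv adj (a :: u) (b :: v)) :
    adj a.1 b.1 ∧ ∃ W, ShuffleEquiv adj u (b :: W) ∧ ShuffleEquiv adj v (a :: W) := by
  obtain ⟨A, B, hw, hadjA, hu⟩ := pull_decomp h
  cases A with
  | nil =>
    exfalso
    simp only [List.nil_append, List.cons.injEq] at hw
    exact hab (congrArg Sigma.fst hw.1).symm
  | cons c A' =>
    simp only [List.cons_append, List.cons.injEq] at hw
    obtain ⟨hbc, hv⟩ := hw
    subst hbc; subst hv
    refine ⟨hadjA b (by simp), A' ++ B, by simpa using hu, ?_⟩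
    apply pull_through hs
    intro t ht
    exact hadjA t (by simp [ht])

end ListLemmas

section ReducedLemmas

variable {Λ : Type u} {G : Λ → Type v} [∀ I, Group (G I)] {adj : Λ → Λ → Prop}

theorem Reduced.of_equiv {L L' : List (Syllable G)} (h : ShuffleEquiv adj L L')
    (hL : Reduced adj L) : Reduced adj L' :=
  fun ⟨W, hW, ham⟩ => hL ⟨W, h.trans hW, ham⟩

theorem amalgamable_nil : ¬ Amalgamable ([] : List (Syllable G)) := by
  rintro ⟨A, B, s, t, -, h⟩; cases A <;> simp at h

theorem reduced_nil : Reduced adj ([] : List (Syllable G)) := by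
  rintro ⟨W, hW, ham⟩
  rw [shuffleEquiv_nil hW] at ham
  exact amalgamable_nil ham

/-- A syllable at vertex `I` can be pulled to the front of `M`. -/
def Pullable (adj : Λ → Λ → Prop) (I : Λ) (M : List (Syllable G)) : Prop :=
  ∃ p : {g : G I // g ≠ 1} × List (Syllable G), ShuffleEquiv adj M (⟨I, p.1⟩ :: p.2)

theorem Pullable.of_equiv (hs : Symmetric adj) {I : Λ} {M M' : List (Syllable G)}
    (h : ShuffleEquiv adj M M') (hp : Pullable adj I M) : Pullable adj I M' :=
  let ⟨p, hp⟩ := hp; ⟨p, (h.symm hs).trans hp⟩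

theorem not_pullable_nil (I : Λ) : ¬ Pullable adj I ([] : List (Syllable G)) := by
  rintro ⟨p, hp⟩
  simpa using shuffleEquiv_nil hp

theorem reduced_cons_iff (hs : Symmetric adj) (hirr : ∀ I : Λ, ¬ adj I I)
    {a : Syllable G} {M : List (Syllable G)} :
    Reduced adj (a :: M) ↔ Reduced adj M ∧ ¬ Pullable adj a.1 M := by
  constructor
  · intro h
    constructor
    · rintro ⟨W, hW, A, B, s, t, hst, rfl⟩
      exact h ⟨a :: (A ++ s :: t :: B), hW.cons a, a :: A, B, s, t, hst, rfl⟩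
    · rintro ⟨p, hp⟩
      exact h ⟨a :: ⟨a.1, p.1⟩ :: p.2, hp.cons a, [], p.2, a, ⟨a.1, p.1⟩, rfl, rfl⟩
  · rintro ⟨hM, hnp⟩ ⟨W, hW, C, D, s, t, hst, rfl⟩
    obtain ⟨A, B, heq, hadjA, hu⟩ := pull_decomp hW
    rcases cons_middle_split heq.symm with ⟨C', hC, hB⟩ | ⟨hA, ha, hB⟩ | ⟨hA, ha, hB⟩ |
      ⟨A', hA, hD⟩
    · subst hB
      refine hM ⟨A ++ (C' ++ s :: t :: D), hu, A ++ C', D, s, t, hst, by simp⟩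
    · obtain ⟨tI, tx⟩ := t
      have hIt : a.1 = tI := by rw [ha]; exact hst
      subst hIt
      rw [hB] at hu
      refine hnp ⟨(tx, A ++ D), hu.trans ?_⟩
      apply pull_through hs
      intro z hz
      exact hadjA z hz
    · exfalso
      have hs1 : s ∈ A := by rw [hA]; simp
      have h2 := hadjA s hs1
      rw [hst, ← ha] at h2
      exact hirr a.1 h2
    · subst hA
      refine hM ⟨C ++ s :: t :: (A' ++ B), by simpa using hu, C, A' ++ B, s, t, hst, by simp⟩

theorem red_tail (hs : Symmetric adj) (hirr : ∀ I : Λ, ¬ adj I I)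
    {L M : List (Syllable G)} {a : Syllable G} (hL : Reduced adj L)
    (hp : ShuffleEquiv adj L (a :: M)) : Reduced adj M ∧ ¬ Pullable adj a.1 M :=
  (reduced_cons_iff hs hirr).1 (Reduced.of_equiv hp hL)

theorem pull_unique (hirr : ∀ I : Λ, ¬ adj I I) {I : Λ}
    {x x' : {g : G I // g ≠ 1}} {M M' : List (Syllable G)}
    (h : ShuffleEquiv adj (⟨I, x⟩ :: M) (⟨I, x'⟩ :: M')) :
    x = x' ∧ ShuffleEquiv adj M M' := by
  obtain ⟨he, hMM⟩ := cons_equiv_cons (a := (⟨I, x⟩ : Syllable G))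
    (b := (⟨I, x'⟩ : Syllable G)) hirr rfl h
  refine ⟨?_, hMM⟩
  have he' : (⟨I, x⟩ : Σ J : Λ, {g : G J // g ≠ 1}) = ⟨I, x'⟩ := he
  exact eq_of_heq (Sigma.mk.inj_iff.mp he').2

theorem pullable_cons (hs : Symmetric adj) {J : Λ} {b : Syllable G}
    {M : List (Syllable G)} (hne : b.1 ≠ J)
    (h : Pullable adj J (b :: M)) : Pullable adj J M := by
  obtain ⟨⟨w, V⟩, hw⟩ := h
  obtain ⟨-, W, hMW, -⟩ :=
    cons_equiv_cons_ne hs (show b.1 ≠ (⟨J, w⟩ : Syllable G).1 from hne) hw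
  exact ⟨(w, W), hMW⟩

theorem pull_pull (hs : Symmetric adj) {I J : Λ} (hne : I ≠ J)
    {x : {g : G I // g ≠ 1}} {y : {g : G J // g ≠ 1}} {L N M : List (Syllable G)}
    (hI : ShuffleEquiv adj L (⟨I, x⟩ :: N)) (hJ : ShuffleEquiv adj L (⟨J, y⟩ :: M)) :
    adj I J ∧ ∃ W, ShuffleEquiv adj N (⟨J, y⟩ :: W) ∧ ShuffleEquiv adj M (⟨I, x⟩ :: W) :=
  cons_equiv_cons_ne hs hne ((hI.symm hs).trans hJ)

end ReducedLemmas

section NFSection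

open scoped Classical

variable {Λ : Type u} {G : Λ → Type v} [∀ I, Group (G I)] {adj : Λ → Λ → Prop}

/-- The set of shuffle classes of reduced words. -/
def NF (adj : Λ → Λ → Prop) (G : Λ → Type v) [∀ I, Group (G I)] : Type (max u v) :=
  Quot (fun L L' : {L : List (Syllable G) // Reduced adj L} => ShuffleEquiv adj L.1 L'.1)

abbrev mkNF {adj : Λ → Λ → Prop} (L : List (Syllable G)) (hL : Reduced adj L) :
    NF adj G :=
  Quot.mk _ ⟨L, hL⟩

theorem mkNF_congr {L L' : List (Syllable G)} (h : L = L') {hL : Reduced adj L}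
    {hL' : Reduced adj L'} : mkNF L hL = mkNF L' hL' := by subst h; rfl

theorem mkNF_sound {L L' : List (Syllable G)} (h : ShuffleEquiv adj L L')
    {hL : Reduced adj L} {hL' : Reduced adj L'} : mkNF L hL = mkNF L' hL' :=
  Quot.sound h

theorem mkNF_exact (hs : Symmetric adj) {L L' : List (Syllable G)}
    {hL : Reduced adj L} {hL' : Reduced adj L'}
    (h : mkNF L hL = mkNF L' hL') : ShuffleEquiv adj L L' := by
  have := congrArg (Quot.lift
    (fun X : {L : List (Syllable G) // Reduced adj L} => ShuffleEquiv adj L X.1)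
    (fun a b hab => propext ⟨fun h' => h'.trans hab, fun h' => h'.trans (ShuffleEquiv.symm hs hab)⟩)) h
  have h2 : (ShuffleEquiv adj L L) = (ShuffleEquiv adj L L') := this
  exact cast h2 Relation.ReflTransGen.refl

/-- The action of `g ∈ G I` on a reduced word. -/
noncomputable def actRep (adj : Λ → Λ → Prop) (I : Λ) (g : G I) (L : List (Syllable G)) :
    List (Syllable G) :=
  if h : Pullable adj I L then
    if hg : g * h.choose.1.1 = 1 then h.choose.2
    else ⟨I, ⟨g * h.choose.1.1, hg⟩⟩ :: h.choose.2
  else if hg : g = 1 then L else ⟨I, ⟨g, hg⟩⟩ :: L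

theorem actRep_of_pull (hs : Symmetric adj) (hirr : ∀ I : Λ, ¬ adj I I) {I : Λ}
    {x : {g : G I // g ≠ 1}} {L M : List (Syllable G)}
    (hp : ShuffleEquiv adj L (⟨I, x⟩ :: M)) (g : G I) :
    ShuffleEquiv adj (actRep adj I g L)
      (if hg : g * x.1 = 1 then M else ⟨I, ⟨g * x.1, hg⟩⟩ :: M) := by
  have h : Pullable adj I L := ⟨(x, M), hp⟩
  have hspec : ShuffleEquiv adj L (⟨I, h.choose.1⟩ :: h.choose.2) := h.choose_spec
  obtain ⟨hx, hM⟩ := pull_unique hirr ((hspec.symm hs).trans hp)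
  rw [actRep, dif_pos h, hx]
  split_ifs with hg
  · exact hM
  · exact hM.cons _

theorem actRep_of_nopull {I : Λ} {L : List (Syllable G)} (h : ¬ Pullable adj I L)
    (g : G I) :
    actRep adj I g L = if hg : g = 1 then L else ⟨I, ⟨g, hg⟩⟩ :: L := by
  rw [actRep, dif_neg h]

theorem actRep_reduced (hs : Symmetric adj) (hirr : ∀ I : Λ, ¬ adj I I) {I : Λ}
    {g : G I} {L : List (Syllable G)} (hL : Reduced adj L) :
    Reduced adj (actRep adj I g L) := by
  by_cases h : Pullable adj I L
  · obtain ⟨⟨x, M⟩, hp0⟩ := h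
    have hp : ShuffleEquiv adj L (⟨I, x⟩ :: M) := hp0
    have hred : Reduced adj (⟨I, x⟩ :: M) := Reduced.of_equiv hp hL
    have h2 := (reduced_cons_iff hs hirr).1 hred
    have t := actRep_of_pull hs hirr hp g
    by_cases hg : g * x.1 = 1
    · rw [dif_pos hg] at t
      exact Reduced.of_equiv (t.symm hs) h2.1
    · rw [dif_neg hg] at t
      refine Reduced.of_equiv (t.symm hs) ?_
      exact (reduced_cons_iff hs hirr).2 ⟨h2.1, h2.2⟩
  · rw [actRep_of_nopull h]
    split_ifs with hg
    · exact hL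
    · exact (reduced_cons_iff hs hirr).2 ⟨hL, h⟩

/-- The action of `g ∈ G I` on shuffle classes of reduced words. -/
noncomputable def act (hs : Symmetric adj) (hirr : ∀ I : Λ, ¬ adj I I) (I : Λ) (g : G I) :
    NF adj G → NF adj G :=
  Quot.lift (fun L => mkNF (actRep adj I g L.1) (actRep_reduced hs hirr L.2))
    (by
      rintro ⟨L, hL⟩ ⟨L', hL'⟩ hLL'
      by_cases h : Pullable adj I L
      · obtain ⟨⟨x, M⟩, hp0⟩ := h
        have hp : ShuffleEquiv adj L (⟨I, x⟩ :: M) := hp0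
        have hp' : ShuffleEquiv adj L' (⟨I, x⟩ :: M) := (ShuffleEquiv.symm hs hLL').trans hp
        exact Quot.sound ((actRep_of_pull hs hirr hp g).trans
          ((actRep_of_pull hs hirr hp' g).symm hs))
      · have h' : ¬ Pullable adj I L' := fun hp' =>
          h (Pullable.of_equiv hs (hLL'.symm hs) hp')
        apply Quot.sound
        show ShuffleEquiv adj (actRep adj I g L) (actRep adj I g L')
        rw [actRep_of_nopull h, actRep_of_nopull h']
        split_ifs with hg
        · exact hLL'
        · exact hLL'.cons _)

theorem act_pull_cancel (hs : Symmetric adj) (hirr : ∀ I : Λ, ¬ adj I I) {I : Λ}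
    {L M : List (Syllable G)} (hL : Reduced adj L) {x : {g : G I // g ≠ 1}}
    (hp : ShuffleEquiv adj L (⟨I, x⟩ :: M)) (g : G I) (hg : g * x.1 = 1)
    (hM : Reduced adj M) :
    act hs hirr I g (mkNF L hL) = mkNF M hM := by
  have t := actRep_of_pull (adj := adj) hs hirr hp g
  rw [dif_pos hg] at t
  exact Quot.sound t

theorem act_pull_merge (hs : Symmetric adj) (hirr : ∀ I : Λ, ¬ adj I I) {I : Λ}
    {L M : List (Syllable G)} (hL : Reduced adj L) {x : {g : G I // g ≠ 1}}
    (hp : ShuffleEquiv adj L (⟨I, x⟩ :: M)) (g : G I) (hg : g * x.1 ≠ 1)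
    (hred : Reduced adj (⟨I, ⟨g * x.1, hg⟩⟩ :: M)) :
    act hs hirr I g (mkNF L hL) = mkNF (⟨I, ⟨g * x.1, hg⟩⟩ :: M) hred := by
  have t := actRep_of_pull (adj := adj) hs hirr hp g
  rw [dif_neg hg] at t
  exact Quot.sound t

theorem act_nopull_one (hs : Symmetric adj) (hirr : ∀ I : Λ, ¬ adj I I) {I : Λ}
    {L : List (Syllable G)} (hL : Reduced adj L) (h : ¬ Pullable adj I L) :
    act hs hirr I (1 : G I) (mkNF L hL) = mkNF L hL := by
  apply Quot.sound
  show ShuffleEquiv adj (actRep adj I 1 L) L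
  rw [actRep_of_nopull h, dif_pos (rfl : (1 : G I) = 1)]
  exact Relation.ReflTransGen.refl

theorem act_nopull (hs : Symmetric adj) (hirr : ∀ I : Λ, ¬ adj I I) {I : Λ}
    {L : List (Syllable G)} (hL : Reduced adj L) (h : ¬ Pullable adj I L)
    (g : G I) (hg : g ≠ 1) (hred : Reduced adj (⟨I, ⟨g, hg⟩⟩ :: L)) :
    act hs hirr I g (mkNF L hL) = mkNF (⟨I, ⟨g, hg⟩⟩ :: L) hred := by
  apply Quot.sound
  show ShuffleEquiv adj (actRep adj I g L) (⟨I, ⟨g, hg⟩⟩ :: L)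
  rw [actRep_of_nopull h, dif_neg hg]
  exact Relation.ReflTransGen.refl

theorem act_one (hs : Symmetric adj) (hirr : ∀ I : Λ, ¬ adj I I) (I : Λ) (n : NF adj G) :
    act hs hirr I (1 : G I) n = n := by
  induction n using Quot.ind with | _ P => ?_
  obtain ⟨L, hL⟩ := P
  show act hs hirr I 1 (mkNF L hL) = mkNF L hL
  by_cases h : Pullable adj I L
  · obtain ⟨⟨x, M⟩, hp0⟩ := h
    have hp : ShuffleEquiv adj L (⟨I, x⟩ :: M) := hp0
    have hg : (1 : G I) * x.1 ≠ 1 := by simpa using x.2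
    have hsyl : (⟨I, ⟨1 * x.1, hg⟩⟩ : Syllable G) = ⟨I, x⟩ :=
      congrArg (fun y : {g : G I // g ≠ 1} => (⟨I, y⟩ : Syllable G))
        (Subtype.ext (one_mul x.1))
    have hred : Reduced adj (⟨I, ⟨1 * x.1, hg⟩⟩ :: M) := by
      refine (congrArg (fun s : Syllable G => Reduced adj (s :: M)) hsyl).mpr ?_
      exact Reduced.of_equiv hp hL
    rw [act_pull_merge hs hirr hL hp 1 hg hred]
    have h1 : mkNF (⟨I, ⟨1 * x.1, hg⟩⟩ :: M) hred
        = mkNF (⟨I, x⟩ :: M) (Reduced.of_equiv hp hL) := mkNF_congr (by rw [hsyl])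
    rw [h1]
    exact mkNF_sound (ShuffleEquiv.symm hs hp)
  · exact act_nopull_one hs hirr hL h

theorem act_mul (hs : Symmetric adj) (hirr : ∀ I : Λ, ¬ adj I I) (I : Λ) (g h : G I)
    (n : NF adj G) :
    act hs hirr I (g * h) n = act hs hirr I g (act hs hirr I h n) := by
  induction n using Quot.ind with | _ P => ?_
  obtain ⟨L, hL⟩ := P
  show act hs hirr I (g * h) (mkNF L hL) = act hs hirr I g (act hs hirr I h (mkNF L hL))
  by_cases hp0 : Pullable adj I L
  · obtain ⟨⟨x, M⟩, hpp⟩ := hp0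
    have hp : ShuffleEquiv adj L (⟨I, x⟩ :: M) := hpp
    obtain ⟨hM, hnpM⟩ := red_tail hs hirr hL hp
    by_cases hh : h * x.1 = 1
    · rw [act_pull_cancel hs hirr hL hp h hh hM]
      have hgx : (g * h) * x.1 = g := by rw [mul_assoc, hh, mul_one]
      by_cases hg1 : g = 1
      · rw [act_pull_cancel hs hirr hL hp (g * h) (by rw [hgx, hg1]) hM, hg1,
          act_one hs hirr I]
      · have hgx' : (g * h) * x.1 ≠ 1 := by rw [hgx]; exact hg1
        have hred : Reduced adj (⟨I, ⟨(g * h) * x.1, hgx'⟩⟩ :: M) :=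
          (reduced_cons_iff hs hirr).2 ⟨hM, hnpM⟩
        have hred2 : Reduced adj (⟨I, ⟨g, hg1⟩⟩ :: M) :=
          (reduced_cons_iff hs hirr).2 ⟨hM, hnpM⟩
        rw [act_pull_merge hs hirr hL hp (g * h) hgx' hred,
          act_nopull hs hirr hM hnpM g hg1 hred2]
        exact mkNF_congr (by rw [show (⟨(g * h) * x.1, hgx'⟩ : {a : G I // a ≠ 1}) =
          ⟨g, hg1⟩ from Subtype.ext hgx])
    · have hred1 : Reduced adj (⟨I, ⟨h * x.1, hh⟩⟩ :: M) :=
        (reduced_cons_iff hs hirr).2 ⟨hM, hnpM⟩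
      rw [act_pull_merge hs hirr hL hp h hh hred1]
      have hp2 : ShuffleEquiv adj ((⟨I, ⟨h * x.1, hh⟩⟩ : Syllable G) :: M)
          ((⟨I, ⟨h * x.1, hh⟩⟩ : Syllable G) :: M) := Relation.ReflTransGen.refl
      by_cases hgh : g * (h * x.1) = 1
      · have hx1 : (g * h) * x.1 = 1 := by rw [mul_assoc]; exact hgh
        rw [act_pull_cancel hs hirr hL hp (g * h) hx1 hM,
          act_pull_cancel hs hirr hred1 hp2 g hgh hM]
      · have hx1 : (g * h) * x.1 ≠ 1 := by rw [mul_assoc]; exact hgh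
        have hredA : Reduced adj (⟨I, ⟨(g * h) * x.1, hx1⟩⟩ :: M) :=
          (reduced_cons_iff hs hirr).2 ⟨hM, hnpM⟩
        have hredB : Reduced adj (⟨I, ⟨g * (h * x.1), hgh⟩⟩ :: M) :=
          (reduced_cons_iff hs hirr).2 ⟨hM, hnpM⟩
        rw [act_pull_merge hs hirr hL hp (g * h) hx1 hredA,
          act_pull_merge hs hirr hred1 hp2 g hgh hredB]
        exact mkNF_congr (by rw [show (⟨(g * h) * x.1, hx1⟩ : {a : G I // a ≠ 1}) =
          ⟨g * (h * x.1), hgh⟩ from Subtype.ext (mul_assoc g h x.1)])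
  · by_cases hh1 : h = 1
    · rw [hh1, act_one hs hirr I, mul_one]
    · have hred1 : Reduced adj (⟨I, ⟨h, hh1⟩⟩ :: L) :=
        (reduced_cons_iff hs hirr).2 ⟨hL, hp0⟩
      rw [act_nopull hs hirr hL hp0 h hh1 hred1]
      have hp2 : ShuffleEquiv adj ((⟨I, ⟨h, hh1⟩⟩ : Syllable G) :: L)
          ((⟨I, ⟨h, hh1⟩⟩ : Syllable G) :: L) := Relation.ReflTransGen.refl
      by_cases hgh : g * h = 1
      · rw [act_pull_cancel hs hirr hred1 hp2 g hgh hL, hgh, act_one hs hirr I]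
      · have hredB : Reduced adj (⟨I, ⟨g * h, hgh⟩⟩ :: L) :=
          (reduced_cons_iff hs hirr).2 ⟨hL, hp0⟩
        rw [act_pull_merge hs hirr hred1 hp2 g hgh hredB,
          act_nopull hs hirr hL hp0 (g * h) hgh hredB]

end NFSection

section ActComm

variable {Λ : Type u} {G : Λ → Type v} [∀ I, Group (G I)] {adj : Λ → Λ → Prop}

theorem act_comm_aux (hs : Symmetric adj) (hirr : ∀ I : Λ, ¬ adj I I) {I J : Λ}
    (hIJ : adj I J) (g : G I) (h : G J) (hg : g ≠ 1) (hh : h ≠ 1)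
    {L : List (Syllable G)} (hL : Reduced adj L) (hnpI : ¬ Pullable adj I L) :
    act hs hirr I g (act hs hirr J h (mkNF L hL)) =
      act hs hirr J h (act hs hirr I g (mkNF L hL)) := by
  have hne : I ≠ J := fun e => hirr I (by rw [e] at hIJ ⊢; exact hIJ)
  have hredIg : Reduced adj (⟨I, ⟨g, hg⟩⟩ :: L) := (reduced_cons_iff hs hirr).2 ⟨hL, hnpI⟩
  by_cases hpJ : Pullable adj J L
  · obtain ⟨⟨y, M⟩, hp0⟩ := hpJ
    have hpJ' : ShuffleEquiv adj L (⟨J, y⟩ :: M) := hp0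
    obtain ⟨hM, hnpJM⟩ := red_tail hs hirr hL hpJ'
    have hnpIM : ¬ Pullable adj I M := by
      rintro ⟨⟨z, V⟩, hz0⟩
      have hz : ShuffleEquiv adj M (⟨I, z⟩ :: V) := hz0
      refine hnpI ⟨(z, (⟨J, y⟩ : Syllable G) :: V), ?_⟩
      show ShuffleEquiv adj L ((⟨I, z⟩ : Syllable G) :: (⟨J, y⟩ : Syllable G) :: V)
      refine hpJ'.trans ((hz.cons _).trans ?_)
      exact Relation.ReflTransGen.single ⟨[], V, ⟨J, y⟩, ⟨I, z⟩, hs hIJ, rfl, rfl⟩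
    have hredIgM : Reduced adj (⟨I, ⟨g, hg⟩⟩ :: M) :=
      (reduced_cons_iff hs hirr).2 ⟨hM, hnpIM⟩
    rw [act_nopull hs hirr hL hnpI g hg hredIg]
    have hpJ2 : ShuffleEquiv adj ((⟨I, ⟨g, hg⟩⟩ : Syllable G) :: L)
        ((⟨J, y⟩ : Syllable G) :: (⟨I, ⟨g, hg⟩⟩ : Syllable G) :: M) := by
      refine (hpJ'.cons _).trans ?_
      exact Relation.ReflTransGen.single ⟨[], M, ⟨I, ⟨g, hg⟩⟩, ⟨J, y⟩, hIJ, rfl, rfl⟩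
    by_cases hy : h * y.1 = 1
    · rw [act_pull_cancel hs hirr hredIg hpJ2 h hy hredIgM,
        act_pull_cancel hs hirr hL hpJ' h hy hM,
        act_nopull hs hirr hM hnpIM g hg hredIgM]
    · have hnpJIgM : ¬ Pullable adj J ((⟨I, ⟨g, hg⟩⟩ : Syllable G) :: M) := fun c =>
        hnpJM (pullable_cons hs (show ((⟨I, ⟨g, hg⟩⟩ : Syllable G)).1 ≠ J from hne) c)
      have hredhyM : Reduced adj (⟨J, ⟨h * y.1, hy⟩⟩ :: M) :=
        (reduced_cons_iff hs hirr).2 ⟨hM, hnpJM⟩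
      have hnpIhyM : ¬ Pullable adj I ((⟨J, ⟨h * y.1, hy⟩⟩ : Syllable G) :: M) := fun c =>
        hnpIM (pullable_cons hs (show ((⟨J, ⟨h * y.1, hy⟩⟩ : Syllable G)).1 ≠ I from
          Ne.symm hne) c)
      have hredhyIgM : Reduced adj
          (⟨J, ⟨h * y.1, hy⟩⟩ :: (⟨I, ⟨g, hg⟩⟩ : Syllable G) :: M) :=
        (reduced_cons_iff hs hirr).2 ⟨hredIgM, hnpJIgM⟩
      have hredIghyM : Reduced adj
          (⟨I, ⟨g, hg⟩⟩ :: (⟨J, ⟨h * y.1, hy⟩⟩ : Syllable G) :: M) :=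
        (reduced_cons_iff hs hirr).2 ⟨hredhyM, hnpIhyM⟩
      rw [act_pull_merge hs hirr hredIg hpJ2 h hy hredhyIgM,
        act_pull_merge hs hirr hL hpJ' h hy hredhyM,
        act_nopull hs hirr hredhyM hnpIhyM g hg hredIghyM]
      exact mkNF_sound (Relation.ReflTransGen.single
        ⟨[], M, ⟨I, ⟨g, hg⟩⟩, ⟨J, ⟨h * y.1, hy⟩⟩, hIJ, rfl, rfl⟩)
  · have hredJh : Reduced adj (⟨J, ⟨h, hh⟩⟩ :: L) := (reduced_cons_iff hs hirr).2 ⟨hL, hpJ⟩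
    have hnpJ_Ig : ¬ Pullable adj J ((⟨I, ⟨g, hg⟩⟩ : Syllable G) :: L) := fun c =>
      hpJ (pullable_cons hs (show ((⟨I, ⟨g, hg⟩⟩ : Syllable G)).1 ≠ J from hne) c)
    have hnpI_Jh : ¬ Pullable adj I ((⟨J, ⟨h, hh⟩⟩ : Syllable G) :: L) := fun c =>
      hnpI (pullable_cons hs (show ((⟨J, ⟨h, hh⟩⟩ : Syllable G)).1 ≠ I from Ne.symm hne) c)
    have hred2 : Reduced adj (⟨I, ⟨g, hg⟩⟩ :: (⟨J, ⟨h, hh⟩⟩ : Syllable G) :: L) :=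
      (reduced_cons_iff hs hirr).2 ⟨hredJh, hnpI_Jh⟩
    have hred3 : Reduced adj (⟨J, ⟨h, hh⟩⟩ :: (⟨I, ⟨g, hg⟩⟩ : Syllable G) :: L) :=
      (reduced_cons_iff hs hirr).2 ⟨hredIg, hnpJ_Ig⟩
    rw [act_nopull hs hirr hL hnpI g hg hredIg, act_nopull hs hirr hL hpJ h hh hredJh,
      act_nopull hs hirr hredJh hnpI_Jh g hg hred2,
      act_nopull hs hirr hredIg hnpJ_Ig h hh hred3]
    exact mkNF_sound (Relation.ReflTransGen.single
      ⟨[], L, ⟨I, ⟨g, hg⟩⟩, ⟨J, ⟨h, hh⟩⟩, hIJ, rfl, rfl⟩)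

theorem act_comm (hs : Symmetric adj) (hirr : ∀ I : Λ, ¬ adj I I) {I J : Λ}
    (hIJ : adj I J) (g : G I) (h : G J) (n : NF adj G) :
    act hs hirr I g (act hs hirr J h n) = act hs hirr J h (act hs hirr I g n) := by
  by_cases hg : g = 1
  · rw [hg, act_one hs hirr I, act_one hs hirr I]
  by_cases hh : h = 1
  · rw [hh, act_one hs hirr J, act_one hs hirr J]
  have hne : I ≠ J := fun e => hirr I (by rw [e] at hIJ ⊢; exact hIJ)
  induction n using Quot.ind with | _ P => ?_
  obtain ⟨L, hL⟩ := P
  show act hs hirr I g (act hs hirr J h (mkNF L hL)) =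
    act hs hirr J h (act hs hirr I g (mkNF L hL))
  by_cases hpI : Pullable adj I L
  · by_cases hpJ : Pullable adj J L
    · obtain ⟨⟨x, N⟩, hq0⟩ := hpI
      have hpIx : ShuffleEquiv adj L (⟨I, x⟩ :: N) := hq0
      obtain ⟨⟨y, M⟩, hp0⟩ := hpJ
      have hpJy : ShuffleEquiv adj L (⟨J, y⟩ :: M) := hp0
      obtain ⟨-, W, hNW, hMW⟩ := pull_pull hs hne hpIx hpJy
      have hLI : ShuffleEquiv adj L (⟨I, x⟩ :: (⟨J, y⟩ : Syllable G) :: W) :=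
        hpIx.trans (hNW.cons _)
      have hLJ : ShuffleEquiv adj L (⟨J, y⟩ :: (⟨I, x⟩ : Syllable G) :: W) :=
        hpJy.trans (hMW.cons _)
      have h1 := (reduced_cons_iff hs hirr).1 (Reduced.of_equiv hLI hL)
      have h2 := (reduced_cons_iff hs hirr).1 (Reduced.of_equiv hLJ hL)
      have h3 := (reduced_cons_iff hs hirr).1 h1.1
      have h4 := (reduced_cons_iff hs hirr).1 h2.1
      by_cases hy : h * y.1 = 1 <;> by_cases hx : g * x.1 = 1
      · -- both cancel
        rw [act_pull_cancel hs hirr hL hLJ h hy h2.1,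
          act_pull_cancel hs hirr h2.1 (Relation.ReflTransGen.refl) g hx h4.1,
          act_pull_cancel hs hirr hL hLI g hx h1.1,
          act_pull_cancel hs hirr h1.1 (Relation.ReflTransGen.refl) h hy h3.1]
      · -- h cancels, g merges
        have hredgxW : Reduced adj (⟨I, ⟨g * x.1, hx⟩⟩ :: W) :=
          (reduced_cons_iff hs hirr).2 ⟨h4.1, h4.2⟩
        have hredgxJyW : Reduced adj (⟨I, ⟨g * x.1, hx⟩⟩ :: (⟨J, y⟩ : Syllable G) :: W) :=
          (reduced_cons_iff hs hirr).2 ⟨h1.1, h1.2⟩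
        have hstep : ShuffleEquiv adj
            ((⟨I, ⟨g * x.1, hx⟩⟩ : Syllable G) :: (⟨J, y⟩ : Syllable G) :: W)
            ((⟨J, y⟩ : Syllable G) :: (⟨I, ⟨g * x.1, hx⟩⟩ : Syllable G) :: W) :=
          Relation.ReflTransGen.single ⟨[], W, ⟨I, ⟨g * x.1, hx⟩⟩, ⟨J, y⟩, hIJ, rfl, rfl⟩
        rw [act_pull_cancel hs hirr hL hLJ h hy h2.1,
          act_pull_merge hs hirr h2.1 (Relation.ReflTransGen.refl) g hx hredgxW,
          act_pull_merge hs hirr hL hLI g hx hredgxJyW,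
          act_pull_cancel hs hirr hredgxJyW hstep h hy hredgxW]
      · -- h merges, g cancels
        have hredhyW : Reduced adj (⟨J, ⟨h * y.1, hy⟩⟩ :: W) :=
          (reduced_cons_iff hs hirr).2 ⟨h3.1, h3.2⟩
        have hredhyIxW : Reduced adj (⟨J, ⟨h * y.1, hy⟩⟩ :: (⟨I, x⟩ : Syllable G) :: W) :=
          (reduced_cons_iff hs hirr).2 ⟨h2.1, h2.2⟩
        have hstep : ShuffleEquiv adj
            ((⟨J, ⟨h * y.1, hy⟩⟩ : Syllable G) :: (⟨I, x⟩ : Syllable G) :: W)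
            ((⟨I, x⟩ : Syllable G) :: (⟨J, ⟨h * y.1, hy⟩⟩ : Syllable G) :: W) :=
          Relation.ReflTransGen.single ⟨[], W, ⟨J, ⟨h * y.1, hy⟩⟩, ⟨I, x⟩, hs hIJ, rfl, rfl⟩
        rw [act_pull_merge hs hirr hL hLJ h hy hredhyIxW,
          act_pull_cancel hs hirr hredhyIxW hstep g hx hredhyW,
          act_pull_cancel hs hirr hL hLI g hx h1.1,
          act_pull_merge hs hirr h1.1 (Relation.ReflTransGen.refl) h hy hredhyW]
      · -- both merge
        have hredhyW : Reduced adj (⟨J, ⟨h * y.1, hy⟩⟩ :: W) :=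
          (reduced_cons_iff hs hirr).2 ⟨h3.1, h3.2⟩
        have hredgxW : Reduced adj (⟨I, ⟨g * x.1, hx⟩⟩ :: W) :=
          (reduced_cons_iff hs hirr).2 ⟨h4.1, h4.2⟩
        have hredhyIxW : Reduced adj (⟨J, ⟨h * y.1, hy⟩⟩ :: (⟨I, x⟩ : Syllable G) :: W) :=
          (reduced_cons_iff hs hirr).2 ⟨h2.1, h2.2⟩
        have hredgxJyW : Reduced adj (⟨I, ⟨g * x.1, hx⟩⟩ :: (⟨J, y⟩ : Syllable G) :: W) :=
          (reduced_cons_iff hs hirr).2 ⟨h1.1, h1.2⟩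
        have hstep1 : ShuffleEquiv adj
            ((⟨J, ⟨h * y.1, hy⟩⟩ : Syllable G) :: (⟨I, x⟩ : Syllable G) :: W)
            ((⟨I, x⟩ : Syllable G) :: (⟨J, ⟨h * y.1, hy⟩⟩ : Syllable G) :: W) :=
          Relation.ReflTransGen.single ⟨[], W, ⟨J, ⟨h * y.1, hy⟩⟩, ⟨I, x⟩, hs hIJ, rfl, rfl⟩
        have hstep2 : ShuffleEquiv adj
            ((⟨I, ⟨g * x.1, hx⟩⟩ : Syllable G) :: (⟨J, y⟩ : Syllable G) :: W)
            ((⟨J, y⟩ : Syllable G) :: (⟨I, ⟨g * x.1, hx⟩⟩ : Syllable G) :: W) :=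
          Relation.ReflTransGen.single ⟨[], W, ⟨I, ⟨g * x.1, hx⟩⟩, ⟨J, y⟩, hIJ, rfl, rfl⟩
        have hnpIhyW : ¬ Pullable adj I ((⟨J, ⟨h * y.1, hy⟩⟩ : Syllable G) :: W) := fun c =>
          h4.2 (pullable_cons hs (show ((⟨J, ⟨h * y.1, hy⟩⟩ : Syllable G)).1 ≠ I from
            Ne.symm hne) c)
        have hnpJgxW : ¬ Pullable adj J ((⟨I, ⟨g * x.1, hx⟩⟩ : Syllable G) :: W) := fun c =>
          h3.2 (pullable_cons hs (show ((⟨I, ⟨g * x.1, hx⟩⟩ : Syllable G)).1 ≠ J from hne) c)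
        have hredA : Reduced adj
            (⟨I, ⟨g * x.1, hx⟩⟩ :: (⟨J, ⟨h * y.1, hy⟩⟩ : Syllable G) :: W) :=
          (reduced_cons_iff hs hirr).2 ⟨hredhyW, hnpIhyW⟩
        have hredB : Reduced adj
            (⟨J, ⟨h * y.1, hy⟩⟩ :: (⟨I, ⟨g * x.1, hx⟩⟩ : Syllable G) :: W) :=
          (reduced_cons_iff hs hirr).2 ⟨hredgxW, hnpJgxW⟩
        rw [act_pull_merge hs hirr hL hLJ h hy hredhyIxW,
          act_pull_merge hs hirr hredhyIxW hstep1 g hx hredA,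
          act_pull_merge hs hirr hL hLI g hx hredgxJyW,
          act_pull_merge hs hirr hredgxJyW hstep2 h hy hredB]
        exact mkNF_sound (Relation.ReflTransGen.single
          ⟨[], W, ⟨I, ⟨g * x.1, hx⟩⟩, ⟨J, ⟨h * y.1, hy⟩⟩, hIJ, rfl, rfl⟩)
    · exact (act_comm_aux hs hirr (hs hIJ) h g hh hg hL hpJ).symm
  · exact act_comm_aux hs hirr hIJ g h hg hh hL hpI

/-- The permutation of normal forms induced by `g ∈ G I`. -/
noncomputable def actPerm (hs : Symmetric adj) (hirr : ∀ I : Λ, ¬ adj I I) (I : Λ)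
    (g : G I) : Equiv.Perm (NF adj G) where
  toFun := act hs hirr I g
  invFun := act hs hirr I g⁻¹
  left_inv n := by rw [← act_mul, inv_mul_cancel, act_one]
  right_inv n := by rw [← act_mul, mul_inv_cancel, act_one]

/-- The homomorphism from `G I` to permutations of normal forms. -/
noncomputable def actHom (hs : Symmetric adj) (hirr : ∀ I : Λ, ¬ adj I I) (I : Λ) :
    G I →* Equiv.Perm (NF adj G) where
  toFun g := actPerm hs hirr I g
  map_one' := Equiv.ext fun n => act_one hs hirr I n
  map_mul' g h := Equiv.ext fun n => act_mul hs hirr I g h n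

/-- The homomorphism from the graph product to permutations of normal forms. -/
noncomputable def rho (hs : Symmetric adj) (hirr : ∀ I : Λ, ¬ adj I I) :
    GraphProduct adj G →* Equiv.Perm (NF adj G) :=
  QuotientGroup.lift _ (Monoid.CoprodI.lift (fun I => actHom hs hirr I))
    (Subgroup.normalClosure_le_normal (by
      rintro w ⟨I, J, x, y, hIJ, rfl⟩
      refine SetLike.mem_coe.2 (MonoidHom.mem_ker.2 ?_)
      have hcomm : (actHom hs hirr I) x * (actHom hs hirr J) y =
          (actHom hs hirr J) y * (actHom hs hirr I) x :=
        Equiv.ext fun n => act_comm hs hirr hIJ x y n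
      simp only [map_mul, map_inv, Monoid.CoprodI.lift_of]
      rw [hcomm]
      group))

theorem rho_mkOf (hs : Symmetric adj) (hirr : ∀ I : Λ, ¬ adj I I) {I : Λ} (x : G I) :
    rho hs hirr (mkOf adj G x) = (actHom hs hirr I) x := by
  show QuotientGroup.lift _ _ _ (QuotientGroup.mk (Monoid.CoprodI.of x)) = _
  rw [QuotientGroup.lift_mk', Monoid.CoprodI.lift_of]

theorem evalWord_nil : evalWord adj G [] = 1 := rfl

theorem evalWord_cons (a : Syllable G) (L : List (Syllable G)) :
    evalWord adj G (a :: L) = mkOf adj G a.2.1 * evalWord adj G L := by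
  simp [evalWord]

theorem evalWord_append (A B : List (Syllable G)) :
    evalWord adj G (A ++ B) = evalWord adj G A * evalWord adj G B := by
  simp [evalWord]

theorem rho_eval (hs : Symmetric adj) (hirr : ∀ I : Λ, ¬ adj I I)
    (L : List (Syllable G)) :
    ∀ hL : Reduced adj L,
      rho hs hirr (evalWord adj G L) (mkNF ([] : List (Syllable G)) reduced_nil)
        = mkNF L hL := by
  induction L with
  | nil =>
    intro hL
    rw [evalWord_nil, map_one]
    rfl
  | cons a M ih =>
    intro hL
    have hred := (reduced_cons_iff hs hirr).1 hL
    rw [evalWord_cons, map_mul, Equiv.Perm.mul_apply, ih hred.1, rho_mkOf hs hirr]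
    have hredc : Reduced adj (⟨a.1, ⟨a.2.1, a.2.2⟩⟩ :: M) := hL
    have : ((actHom hs hirr a.1) a.2.1 : Equiv.Perm (NF adj G)) (mkNF M hred.1)
        = mkNF (⟨a.1, ⟨a.2.1, a.2.2⟩⟩ :: M) hredc :=
      act_nopull hs hirr hred.1 hred.2 a.2.1 a.2.2 hredc
    rw [this]
    exact mkNF_congr rfl

/-- The normal form theorem: reduced expressions with equal evaluations are shuffle
equivalent. -/
theorem shuffle_of_eval_eq (hs : Symmetric adj) (hirr : ∀ I : Λ, ¬ adj I I)
    {L L' : List (Syllable G)} (hL : Reduced adj L) (hL' : Reduced adj L')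
    (he : evalWord adj G L = evalWord adj G L') : ShuffleEquiv adj L L' := by
  have h1 := rho_eval hs hirr L hL
  have h2 := rho_eval hs hirr L' hL'
  rw [he] at h1
  exact mkNF_exact hs (h1.symm.trans h2)

theorem mkOf_mul {I : Λ} (x y : G I) :
    mkOf adj G (x * y) = mkOf adj G x * mkOf adj G y := by
  show QuotientGroup.mk (Monoid.CoprodI.of (x * y)) = _
  rw [map_mul]
  rfl

theorem mkOf_one (I : Λ) : mkOf adj G (1 : G I) = 1 := by
  show QuotientGroup.mk (Monoid.CoprodI.of (1 : G I)) = _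
  rw [map_one]
  rfl

theorem mkOf_comm (hs : Symmetric adj) {I J : Λ} (hIJ : adj I J) (x : G I) (y : G J) :
    mkOf adj G x * mkOf adj G y = mkOf adj G y * mkOf adj G x := by
  show QuotientGroup.mk _ * QuotientGroup.mk _ = QuotientGroup.mk _ * QuotientGroup.mk _
  erw [← QuotientGroup.mk_mul, ← QuotientGroup.mk_mul]
  refine QuotientGroup.eq.2 (Subgroup.subset_normalClosure ⟨J, I, y⁻¹, x⁻¹, hs hIJ, ?_⟩)
  simp [map_inv, mul_inv_rev, mul_assoc]

theorem eval_step (hs : Symmetric adj) {L L' : List (Syllable G)}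
    (h : ShuffleStep adj L L') : evalWord adj G L = evalWord adj G L' := by
  obtain ⟨A, B, s, t, hadj, rfl, rfl⟩ := h
  rw [evalWord_append, evalWord_append, evalWord_cons, evalWord_cons, evalWord_cons,
    evalWord_cons]
  congr 1
  rw [← mul_assoc, mkOf_comm hs hadj, mul_assoc]

theorem eval_equiv (hs : Symmetric adj) {L L' : List (Syllable G)}
    (h : ShuffleEquiv adj L L') : evalWord adj G L = evalWord adj G L' := by
  induction h with
  | refl => rfl
  | tail _ step ih => exact ih.trans (eval_step hs step)

end ActComm

section Reduction

variable {Λ : Type u} {G : Λ → Type v} [∀ I, Group (G I)] {adj : Λ → Λ → Prop}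

open scoped Classical

theorem PositiveWord.of_equiv {Pc : ∀ I, Submonoid (G I)} {L L' : List (Syllable G)}
    (h : ShuffleEquiv adj L L') (hp : PositiveWord Pc L) : PositiveWord Pc L' :=
  fun s hs' => hp s (h.perm.symm.subset hs')

/-- The letter in the monoid graph product corresponding to a (positive) syllable. -/
noncomputable def mgpLetter (adj : Λ → Λ → Prop) (Pc : ∀ I, Submonoid (G I))
    (s : Syllable G) : MonoidGraphProduct adj (fun I => ↥(Pc I)) :=
  if h : s.2.1 ∈ Pc s.1 then mgpOf adj (⟨s.2.1, h⟩ : ↥(Pc s.1)) else 1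

/-- The image of a word in the monoid graph product. -/
noncomputable def mgpWord (adj : Λ → Λ → Prop) (Pc : ∀ I, Submonoid (G I))
    (L : List (Syllable G)) : MonoidGraphProduct adj (fun I => ↥(Pc I)) :=
  (L.map (mgpLetter adj Pc)).prod

theorem mgpOf_mul {M : Λ → Type v} [∀ I, Monoid (M I)] {I : Λ} (x y : M I) :
    mgpOf adj (x * y) = mgpOf adj x * mgpOf adj y := by
  unfold mgpOf
  rw [map_mul Monoid.CoprodI.of x y]
  rfl

theorem mgpOf_comm {M : Λ → Type v} [∀ I, Monoid (M I)] {I J : Λ} (hIJ : adj I J)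
    (x : M I) (y : M J) : mgpOf adj x * mgpOf adj y = mgpOf adj y * mgpOf adj x :=
  (Con.eq _).2 (ConGen.Rel.of _ _ ⟨I, J, x, y, hIJ, rfl, rfl⟩)

theorem mgpLetter_comm {Pc : ∀ I, Submonoid (G I)} {s t : Syllable G}
    (hadj : adj s.1 t.1) :
    mgpLetter adj Pc s * mgpLetter adj Pc t = mgpLetter adj Pc t * mgpLetter adj Pc s := by
  unfold mgpLetter
  split_ifs with h1 h2 h2
  · exact mgpOf_comm hadj _ _
  · rw [one_mul, mul_one]
  · rw [one_mul, mul_one]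
  · rfl

theorem mgpWord_step {Pc : ∀ I, Submonoid (G I)} {L L' : List (Syllable G)}
    (h : ShuffleStep adj L L') : mgpWord adj Pc L = mgpWord adj Pc L' := by
  obtain ⟨A, B, s, t, hadj, rfl, rfl⟩ := h
  unfold mgpWord
  simp only [List.map_append, List.map_cons, List.prod_append, List.prod_cons]
  congr 1
  rw [← mul_assoc, mgpLetter_comm hadj, mul_assoc]

theorem mgpWord_equiv {Pc : ∀ I, Submonoid (G I)} {L L' : List (Syllable G)}
    (h : ShuffleEquiv adj L L') : mgpWord adj Pc L = mgpWord adj Pc L' := by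
  induction h with
  | refl => rfl
  | tail _ step ih => exact ih.trans (mgpWord_step step)

/-- Every word can be reduced, preserving the evaluation, positivity, and (for positive
words) the image in the monoid graph product. -/
theorem reduce_word (Pc : ∀ I, Submonoid (G I)) (hpo : ∀ I, IsPoGroup (Pc I))
    (hs : Symmetric adj) (hirr : ∀ I : Λ, ¬ adj I I) :
    ∀ (n : ℕ) (L : List (Syllable G)), L.length ≤ n →
      ∃ R, Reduced adj R ∧ evalWord adj G R = evalWord adj G L ∧
        (PositiveWord Pc L → PositiveWord Pc R ∧ mgpWord adj Pc R = mgpWord adj Pc L) := by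
  intro n
  induction n with
  | zero =>
    intro L hlen
    have hnil : L = [] := List.length_eq_zero_iff.1 (Nat.le_zero.1 hlen)
    subst hnil
    exact ⟨[], reduced_nil, rfl, fun h => ⟨h, rfl⟩⟩
  | succ n ih =>
    intro L hlen
    by_cases hred : Reduced adj L
    · exact ⟨L, hred, rfl, fun h => ⟨h, rfl⟩⟩
    · obtain ⟨W, hW, ham⟩ := not_not.1 hred
      obtain ⟨A, B, s, t, hst, rfl⟩ := ham
      obtain ⟨sI, sx⟩ := s
      obtain ⟨tI, tx⟩ := t
      have hIt : sI = tI := hst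
      subst hIt
      by_cases hz : sx.1 * tx.1 = 1
      · have heval : evalWord adj G (A ++ B) = evalWord adj G L := by
          erw [eval_equiv hs hW, evalWord_append, evalWord_append, evalWord_cons,
            evalWord_cons]
          show evalWord adj G A * evalWord adj G B
              = evalWord adj G A * (mkOf adj G sx.1 * (mkOf adj G tx.1 * evalWord adj G B))
          rw [← mul_assoc (mkOf adj G sx.1), ← mkOf_mul, hz, mkOf_one, one_mul]
        have hlen2 : (A ++ B).length ≤ n := by
          have h3 := hW.perm.length_eq
          erw [List.length_append, List.length_cons, List.length_cons] at h3
          simp only [List.length_append]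
          omega
        obtain ⟨R, hR1, hR2, hR3⟩ := ih (A ++ B) hlen2
        refine ⟨R, hR1, hR2.trans heval, ?_⟩
        intro hposL
        exfalso
        have hposW := PositiveWord.of_equiv hW hposL
        have hsx : sx.1 ∈ Pc sI := hposW ⟨sI, sx⟩ (List.mem_append_right _ List.mem_cons_self)
        have htx : tx.1 ∈ Pc sI := hposW ⟨sI, tx⟩ (List.mem_append_right _ (List.mem_cons_of_mem _ List.mem_cons_self))
        have hinv : sx.1⁻¹ = tx.1 := inv_eq_of_mul_eq_one_right hz
        exact sx.2 (hpo sI sx.1 hsx (by rw [hinv]; exact htx))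
      · have heval : evalWord adj G (A ++ ⟨sI, ⟨sx.1 * tx.1, hz⟩⟩ :: B)
            = evalWord adj G L := by
          erw [eval_equiv hs hW, evalWord_append, evalWord_append, evalWord_cons,
            evalWord_cons, evalWord_cons]
          show evalWord adj G A * (mkOf adj G (sx.1 * tx.1) * evalWord adj G B)
              = evalWord adj G A * (mkOf adj G sx.1 * (mkOf adj G tx.1 * evalWord adj G B))
          rw [mkOf_mul, mul_assoc]
        have hlen2 : ((A ++ ⟨sI, ⟨sx.1 * tx.1, hz⟩⟩ :: B : List (Syllable G))).length ≤ n := by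
          have h3 := hW.perm.length_eq
          erw [List.length_append, List.length_cons, List.length_cons] at h3
          erw [List.length_append, List.length_cons]
          omega
        obtain ⟨R, hR1, hR2, hR3⟩ := ih _ hlen2
        refine ⟨R, hR1, hR2.trans heval, ?_⟩
        intro hposL
        have hposW := PositiveWord.of_equiv hW hposL
        have hsx : sx.1 ∈ Pc sI := hposW ⟨sI, sx⟩ (List.mem_append_right _ List.mem_cons_self)
        have htx : tx.1 ∈ Pc sI := hposW ⟨sI, tx⟩ (List.mem_append_right _ (List.mem_cons_of_mem _ List.mem_cons_self))
        have hpos2 : PositiveWord Pc (A ++ ⟨sI, ⟨sx.1 * tx.1, hz⟩⟩ :: B) := by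
          intro w hw
          rcases List.mem_append.1 hw with hw | hw
          · exact hposW w (by simp [hw])
          · rcases List.mem_cons.1 hw with hw | hw
            · subst hw
              exact mul_mem hsx htx
            · exact hposW w (List.mem_append_right _ (List.mem_cons_of_mem _ (List.mem_cons_of_mem _ hw)))
        obtain ⟨hRpos, hRmgp⟩ := hR3 hpos2
        refine ⟨hRpos, hRmgp.trans ?_⟩
        have h1 : mgpWord adj Pc (A ++ ⟨sI, ⟨sx.1 * tx.1, hz⟩⟩ :: B)
            = mgpWord adj Pc (A ++ ⟨sI, sx⟩ :: ⟨sI, tx⟩ :: B) := by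
          unfold mgpWord
          erw [List.map_append, List.map_append, List.map_cons, List.map_cons, List.map_cons,
            List.prod_append, List.prod_append, List.prod_cons, List.prod_cons, List.prod_cons]
          congr 1
          rw [← mul_assoc]
          congr 1
          unfold mgpLetter
          dsimp only
          rw [dif_pos (mul_mem hsx htx), dif_pos hsx, dif_pos htx, ← mgpOf_mul]
          rfl
        exact h1.trans (mgpWord_equiv hW).symm

theorem exists_reduced (Pc : ∀ I, Submonoid (G I)) (hpo : ∀ I, IsPoGroup (Pc I))
    (hs : Symmetric adj) (hirr : ∀ I : Λ, ¬ adj I I) (L : List (Syllable G)) :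
    ∃ R, Reduced adj R ∧ evalWord adj G R = evalWord adj G L ∧
      (PositiveWord Pc L → PositiveWord Pc R ∧ mgpWord adj Pc R = mgpWord adj Pc L) :=
  reduce_word Pc hpo hs hirr L.length L le_rfl

/-- Inversion of a syllable. -/
def invSyl (s : Syllable G) : Syllable G := ⟨s.1, ⟨(s.2.1)⁻¹, inv_ne_one.2 s.2.2⟩⟩

/-- The reversed inverse word, an expression for the inverse. -/
def invRev (L : List (Syllable G)) : List (Syllable G) := (L.map invSyl).reverse

theorem invSyl_invSyl (s : Syllable G) : invSyl (invSyl s) = s := by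
  show (⟨s.1, ⟨(s.2.1⁻¹)⁻¹, _⟩⟩ : Syllable G) = s
  exact congrArg (fun x : {g : G s.1 // g ≠ 1} => (⟨s.1, x⟩ : Syllable G))
    (Subtype.ext (inv_inv s.2.1))

theorem invRev_invRev (L : List (Syllable G)) : invRev (invRev L) = L := by
  show ((L.map invSyl).reverse.map invSyl).reverse = L
  rw [List.map_reverse, List.reverse_reverse, List.map_map,
    show invSyl ∘ invSyl = @id (Syllable G) from funext invSyl_invSyl, List.map_id]

theorem invRev_step (hs : Symmetric adj) {L L' : List (Syllable G)}
    (h : ShuffleStep adj L L') : ShuffleStep adj (invRev L) (invRev L') := by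
  obtain ⟨A, B, s, t, hadj, rfl, rfl⟩ := h
  exact ⟨invRev B, invRev A, invSyl t, invSyl s, hs hadj, by simp [invRev], by simp [invRev]⟩

theorem invRev_equiv (hs : Symmetric adj) {L L' : List (Syllable G)}
    (h : ShuffleEquiv adj L L') : ShuffleEquiv adj (invRev L) (invRev L') :=
  Relation.ReflTransGen.lift invRev (fun _ _ hab => invRev_step hs hab) _ _ h

theorem amalg_invRev {W : List (Syllable G)} (h : Amalgamable W) :
    Amalgamable (invRev W) := by
  obtain ⟨A, B, s, t, hst, rfl⟩ := h
  exact ⟨invRev B, invRev A, invSyl t, invSyl s, hst.symm, by simp [invRev]⟩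

theorem Reduced.invRev' (hs : Symmetric adj) {L : List (Syllable G)}
    (hL : Reduced adj L) : Reduced adj (invRev L) := by
  rintro ⟨W, hW, ham⟩
  refine hL ⟨invRev W, ?_, amalg_invRev ham⟩
  have h2 := invRev_equiv hs hW
  rwa [invRev_invRev] at h2

theorem mkOf_inv {I : Λ} (x : G I) : mkOf adj G x⁻¹ = (mkOf adj G x)⁻¹ := by
  show QuotientGroup.mk (Monoid.CoprodI.of x⁻¹) = _
  rw [map_inv]
  rfl

theorem eval_invRev (L : List (Syllable G)) :
    evalWord adj G (invRev L) = (evalWord adj G L)⁻¹ := by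
  induction L with
  | nil => show evalWord adj G [] = _; rw [evalWord_nil, inv_one]
  | cons a L ih =>
    have hc : invRev (a :: L) = invRev L ++ [invSyl a] := by simp [invRev]
    rw [hc, evalWord_append, ih, evalWord_cons, evalWord_cons, evalWord_nil, mul_one,
      mul_inv_rev]
    show _ * mkOf adj G (a.2.1⁻¹) = _
    rw [mkOf_inv]

theorem exists_expr (x : GraphProduct adj G) : ∃ L, evalWord adj G L = x := by
  induction x using QuotientGroup.induction_on with
  | H w =>
  induction w using Monoid.CoprodI.induction_on with
  | one =>
    refine ⟨[], ?_⟩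
    rw [evalWord_nil]
    rfl
  | of i m =>
    by_cases hm : m = 1
    · refine ⟨[], ?_⟩
      rw [evalWord_nil, hm]
      show (1 : GraphProduct adj G) = QuotientGroup.mk (Monoid.CoprodI.of (1 : G i))
      rw [map_one]
      rfl
    · refine ⟨[⟨i, ⟨m, hm⟩⟩], ?_⟩
      show mkOf adj G m * evalWord adj G [] = _
      rw [evalWord_nil, mul_one]
      rfl
  | mul w1 w2 ih1 ih2 =>
    obtain ⟨L1, hL1⟩ := ih1
    obtain ⟨L2, hL2⟩ := ih2
    refine ⟨L1 ++ L2, ?_⟩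
    rw [evalWord_append, hL1, hL2]
    rfl

end Reduction

section Assembly

variable {Λ : Type u} {G : Λ → Type v} [∀ I, Group (G I)] {adj : Λ → Λ → Prop}

/-- The canonical homomorphism from a factor's positive cone to the cone of the graph
product. -/
def toPosHom (adj : Λ → Λ → Prop) (Pc : ∀ I, Submonoid (G I)) (I : Λ) :
    ↥(Pc I) →* ↥(posCone adj G Pc) where
  toFun p := ⟨mkOf adj G p.1, Submonoid.subset_closure ⟨I, p.1, p.2, rfl⟩⟩
  map_one' := Subtype.ext (by
    show mkOf adj G ((1 : ↥(Pc I)) : G I) = 1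
    rw [OneMemClass.coe_one, mkOf_one])
  map_mul' p q := Subtype.ext (by
    show mkOf adj G ((p * q : ↥(Pc I)) : G I) = mkOf adj G p.1 * mkOf adj G q.1
    rw [MulMemClass.coe_mul, mkOf_mul])

/-- The canonical homomorphism from the monoid graph product of the cones to the cone
of the graph product. -/
noncomputable def phiHom (hs : Symmetric adj) (Pc : ∀ I, Submonoid (G I)) :
    MonoidGraphProduct adj (fun I => ↥(Pc I)) →* ↥(posCone adj G Pc) :=
  Con.lift _ (Monoid.CoprodI.lift (fun I => toPosHom adj Pc I))
    (Con.conGen_le.2 (by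
      rintro x y ⟨I, J, p, q, hIJ, rfl, rfl⟩
      rw [Con.ker_rel]
      simp only [map_mul, Monoid.CoprodI.lift_of]
      exact Subtype.ext (mkOf_comm hs hIJ (p : G I) (q : G J))))

theorem phiHom_mgpOf (hs : Symmetric adj) (Pc : ∀ I, Submonoid (G I)) {I : Λ}
    (p : ↥(Pc I)) : phiHom hs Pc (mgpOf adj p) = toPosHom adj Pc I p := by
  show Con.lift _ _ _ (Con.mk' _ (Monoid.CoprodI.of (M := fun I => ↥(Pc I)) p)) = _
  rw [Con.lift_mk', Monoid.CoprodI.lift_of]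

theorem phiHom_mgpWord (hs : Symmetric adj) (Pc : ∀ I, Submonoid (G I))
    (L : List (Syllable G)) (hpos : PositiveWord Pc L) :
    ((phiHom hs Pc (mgpWord adj Pc L) : ↥(posCone adj G Pc)) : GraphProduct adj G)
      = evalWord adj G L := by
  induction L with
  | nil =>
    rw [show mgpWord adj Pc ([] : List (Syllable G)) = 1 from rfl, map_one, evalWord_nil]
    rfl
  | cons a M ih =>
    have hpa : a.2.1 ∈ Pc a.1 := hpos a (by simp)
    have hposM : PositiveWord Pc M := fun s hs' => hpos s (by simp [hs'])
    have h1 : mgpWord adj Pc (a :: M) = mgpLetter adj Pc a * mgpWord adj Pc M := by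
      unfold mgpWord
      rw [List.map_cons, List.prod_cons]
    rw [h1, map_mul, Submonoid.coe_mul, ih hposM, evalWord_cons]
    congr 1
    unfold mgpLetter
    rw [dif_pos hpa, phiHom_mgpOf]
    rfl

theorem mgp_rep (Pc : ∀ I, Submonoid (G I))
    (u : MonoidGraphProduct adj (fun I => ↥(Pc I))) :
    ∃ L, PositiveWord Pc L ∧ mgpWord adj Pc L = u := by
  induction u using Con.induction_on with | _ w => ?_
  induction w using Monoid.CoprodI.induction_on with
  | one =>
    refine ⟨[], fun s h => absurd h (List.not_mem_nil), ?_⟩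
    show (1 : MonoidGraphProduct adj (fun I => ↥(Pc I))) = _
    rfl
  | of i p =>
    by_cases hp : (p : G i) = 1
    · have hp1 : p = 1 := Subtype.ext hp
      subst hp1
      refine ⟨[], fun s h => absurd h (List.not_mem_nil), ?_⟩
      rw [map_one]
      rfl
    · refine ⟨[⟨i, ⟨(p : G i), hp⟩⟩], ?_, ?_⟩
      · intro s hs'
        replace hs' := List.mem_singleton.1 hs'
        subst hs'
        exact p.2
      · show mgpLetter adj Pc ⟨i, ⟨(p : G i), hp⟩⟩ * 1 = _
        rw [mul_one]
        unfold mgpLetter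
        rw [dif_pos (show ((⟨i, ⟨(p : G i), hp⟩⟩ : Syllable G)).2.1
          ∈ Pc ((⟨i, ⟨(p : G i), hp⟩⟩ : Syllable G)).1 from p.2)]
        rfl
  | mul w1 w2 ih1 ih2 =>
    obtain ⟨L1, h1p, h1e⟩ := ih1
    obtain ⟨L2, h2p, h2e⟩ := ih2
    refine ⟨L1 ++ L2, ?_, ?_⟩
    · intro s hs'
      rcases List.mem_append.1 hs' with hs' | hs'
      · exact h1p s hs'
      · exact h2p s hs'
    · show (List.map (mgpLetter adj Pc) (L1 ++ L2)).prod = _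
      rw [List.map_append, List.prod_append]
      rw [show (List.map (mgpLetter adj Pc) L1).prod = mgpWord adj Pc L1 from rfl,
        show (List.map (mgpLetter adj Pc) L2).prod = mgpWord adj Pc L2 from rfl,
        h1e, h2e]
      rfl

theorem phi_inj (hs : Symmetric adj) (hirr : ∀ I : Λ, ¬ adj I I)
    (Pc : ∀ I, Submonoid (G I)) (hpo : ∀ I, IsPoGroup (Pc I)) :
    Function.Injective (phiHom hs Pc) := by
  intro u v huv
  obtain ⟨Lu, hup, hue⟩ := mgp_rep Pc u
  obtain ⟨Lv, hvp, hve⟩ := mgp_rep Pc v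
  have e1 := phiHom_mgpWord hs Pc Lu hup
  have e2 := phiHom_mgpWord hs Pc Lv hvp
  rw [hue] at e1
  rw [hve] at e2
  have he : evalWord adj G Lu = evalWord adj G Lv := by rw [← e1, ← e2, huv]
  obtain ⟨Ru, hRu, hRue, hRup⟩ := exists_reduced Pc hpo hs hirr Lu
  obtain ⟨Rv, hRv, hRve, hRvp⟩ := exists_reduced Pc hpo hs hirr Lv
  obtain ⟨hRupos, hRumgp⟩ := hRup hup
  obtain ⟨hRvpos, hRvmgp⟩ := hRvp hvp
  have hee : evalWord adj G Ru = evalWord adj G Rv := hRue.trans (he.trans hRve.symm)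
  have hsh := shuffle_of_eval_eq hs hirr hRu hRv hee
  have hmgp := mgpWord_equiv (Pc := Pc) hsh
  rw [hRumgp, hRvmgp, hue, hve] at hmgp
  exact hmgp

theorem phi_surj (hs : Symmetric adj) (Pc : ∀ I, Submonoid (G I)) :
    Function.Surjective (phiHom hs Pc) := by
  intro z
  have key : ∀ x (_ : x ∈ posCone adj G Pc),
      ∃ u, ((phiHom hs Pc u : ↥(posCone adj G Pc)) : GraphProduct adj G) = x := by
    intro x hx
    refine Submonoid.closure_induction ?_ ?_ ?_ hx
    · rintro y ⟨I, p, hp, rfl⟩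
      refine ⟨mgpOf adj (⟨p, hp⟩ : ↥(Pc I)), ?_⟩
      rw [phiHom_mgpOf]
      rfl
    · exact ⟨1, by rw [map_one]; rfl⟩
    · rintro x y hx hy ⟨u, hu⟩ ⟨v, hv⟩
      exact ⟨u * v, by rw [map_mul, Submonoid.coe_mul, hu, hv]⟩
  obtain ⟨u, hu⟩ := key z.1 z.2
  exact ⟨u, Subtype.ext hu⟩

end Assembly

/-- Let `G` be a graph product of partially ordered groups
`(G I, Pc I)` over a simplicial graph, and let `P` be the submonoid of the graph product
generated by the union of the `Pc I`.  Then: an element lies in `P` iff it has a positive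
reduced expression, iff all its reduced expressions are positive; `P ∩ P⁻¹ = {1}`, so
`(G,P)` is a partially ordered group; two positive elements are equal iff their reduced
expressions are shuffle equivalent; and `P` is isomorphic, as a monoid and canonically on
the generators, to the monoid graph product of the `Pc I`. -/
theorem graphProduct_positive_cone {Λ : Type u} (adj : Λ → Λ → Prop)
    (hsymm : Symmetric adj) (hirr : ∀ I : Λ, ¬ adj I I)
    (G : Λ → Type v) [∀ I, Group (G I)]
    (Pc : ∀ I, Submonoid (G I)) (hpo : ∀ I, IsPoGroup (Pc I)) :
    (∀ x : GraphProduct adj G, x ∈ posCone adj G Pc ↔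
        ∃ L, Reduced adj L ∧ ExprFor adj G L x ∧ PositiveWord Pc L) ∧
    (∀ x : GraphProduct adj G, x ∈ posCone adj G Pc ↔
        ∀ L, Reduced adj L → ExprFor adj G L x → PositiveWord Pc L) ∧
    IsPoGroup (posCone adj G Pc) ∧
    (∀ L L' : List (Syllable G), Reduced adj L → Reduced adj L' →
        PositiveWord Pc L → PositiveWord Pc L' →
        (evalWord adj G L = evalWord adj G L' ↔ ShuffleEquiv adj L L')) ∧
    (∃ e : MonoidGraphProduct adj (fun I => ↥(Pc I)) ≃* ↥(posCone adj G Pc),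
      ∀ (I : Λ) (p : ↥(Pc I)),
        ((e (mgpOf adj p) : ↥(posCone adj G Pc)) : GraphProduct adj G) =
          mkOf adj G (p : G I)) := by
  classical
  have hex : ∀ x : GraphProduct adj G, x ∈ posCone adj G Pc ↔
      ∃ L, Reduced adj L ∧ ExprFor adj G L x ∧ PositiveWord Pc L := by
    intro x
    constructor
    · intro hx
      refine Submonoid.closure_induction ?_ ?_ ?_ hx
      · rintro y ⟨I, p, hp, rfl⟩
        by_cases hp1 : p = 1
        · refine ⟨[], reduced_nil, ?_, fun s h => absurd h (List.not_mem_nil)⟩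
          show evalWord adj G [] = mkOf adj G p
          rw [evalWord_nil, hp1, mkOf_one]
        · refine ⟨[⟨I, ⟨p, hp1⟩⟩], ?_, ?_, ?_⟩
          · exact (reduced_cons_iff hsymm hirr).2 ⟨reduced_nil, not_pullable_nil I⟩
          · show mkOf adj G p * evalWord adj G [] = mkOf adj G p
            rw [evalWord_nil, mul_one]
          · intro s hs'
            replace hs' := List.mem_singleton.1 hs'
            subst hs'
            exact hp
      · exact ⟨[], reduced_nil, rfl, fun s h => absurd h (List.not_mem_nil)⟩
      · rintro a b ha hb ⟨Lx, hLx, hEx, hPx⟩ ⟨Ly, hLy, hEy, hPy⟩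
        obtain ⟨R, hR, hRe, hRp⟩ := exists_reduced Pc hpo hsymm hirr (Lx ++ Ly)
        have hposxy : PositiveWord Pc (Lx ++ Ly) := by
          intro s h
          rcases List.mem_append.1 h with h | h
          · exact hPx s h
          · exact hPy s h
        refine ⟨R, hR, ?_, (hRp hposxy).1⟩
        show evalWord adj G R = a * b
        rw [hRe, evalWord_append, show evalWord adj G Lx = a from hEx,
          show evalWord adj G Ly = b from hEy]
    · rintro ⟨L, hL, hE, hP⟩
      have key : ∀ M : List (Syllable G), PositiveWord Pc M →
          evalWord adj G M ∈ posCone adj G Pc := by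
        intro M hP'
        induction M with
        | nil => exact one_mem _
        | cons a M ih =>
          rw [evalWord_cons]
          exact mul_mem (Submonoid.subset_closure ⟨a.1, a.2.1, hP' a (by simp), rfl⟩)
            (ih fun s h => hP' s (by simp [h]))
      exact (show evalWord adj G L = x from hE) ▸ key L hP
  have hall : ∀ x : GraphProduct adj G, x ∈ posCone adj G Pc ↔
      ∀ L, Reduced adj L → ExprFor adj G L x → PositiveWord Pc L := by
    intro x
    constructor
    · intro hx L hL hE
      obtain ⟨L0, hL0, hE0, hP0⟩ := (hex x).1 hx
      have hsh := shuffle_of_eval_eq hsymm hirr hL0 hL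
        ((show evalWord adj G L0 = x from hE0).trans (show evalWord adj G L = x from hE).symm)
      exact PositiveWord.of_equiv hsh hP0
    · intro hallL
      obtain ⟨L, hLe⟩ := exists_expr x
      obtain ⟨R, hR, hRe, -⟩ := exists_reduced Pc hpo hsymm hirr L
      have hERx : ExprFor adj G R x := hRe.trans hLe
      exact (hex x).2 ⟨R, hR, hERx, hallL R hR hERx⟩
  have hpog : IsPoGroup (posCone adj G Pc) := by
    intro x hx hxinv
    obtain ⟨L, hL, hE, hP⟩ := (hex x).1 hx
    obtain ⟨M, hM, hEM, hPM⟩ := (hex x⁻¹).1 hxinv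
    have hinvL : Reduced adj (invRev L) := hL.invRev' hsymm
    have heq : evalWord adj G (invRev L) = evalWord adj G M := by
      rw [eval_invRev, show evalWord adj G L = x from hE,
        show evalWord adj G M = x⁻¹ from hEM]
    have hsh := shuffle_of_eval_eq hsymm hirr hinvL hM heq
    have hPinv : PositiveWord Pc (invRev L) :=
      PositiveWord.of_equiv (hsh.symm hsymm) hPM
    cases L with
    | nil =>
      rw [← show evalWord adj G [] = x from hE]
      rfl
    | cons a M' =>
      exfalso
      have hmem : invSyl a ∈ invRev (a :: M') :=
        List.mem_reverse.2 (List.mem_map_of_mem (f := invSyl) List.mem_cons_self)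
      have h1 : (invSyl a).2.1 ∈ Pc (invSyl a).1 := hPinv _ hmem
      have h2 : a.2.1 ∈ Pc a.1 := hP a (by simp)
      exact a.2.2 (hpo a.1 a.2.1 h2 h1)
  refine ⟨hex, hall, hpog, ?_, ?_⟩
  · intro L L' hL hL' _ _
    exact ⟨shuffle_of_eval_eq hsymm hirr hL hL', eval_equiv hsymm⟩
  · refine ⟨MulEquiv.ofBijective (phiHom hsymm Pc)
      ⟨phi_inj hsymm hirr Pc hpo, phi_surj hsymm Pc⟩, ?_⟩
    intro I p
    show ((phiHom hsymm Pc (mgpOf adj p) : ↥(posCone adj G Pc)) : GraphProduct adj G) = _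
    rw [phiHom_mgpOf]
    rfl
end
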